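/- arXiv:2505.24027 — 7 statements merged into one kernel-verified Lean document; each statement's English description precedes it below -/
import Mathlib

section
/- For all integers n, k, t ≥ 0 with k ≤ n, the identity C(n+t-1, n)·C(n, k) + C(n+t-1, n-1)·C(n-1, k) = C(n+t-k, t)·C(n+t-1, k) holds, where C(a,b) denotes the binomial coefficient. -/
/-!
Both terms on the left factor through `C(n+t-1, k)` by the subset-of-a-subset identity
`C(a, b) C(b, c) = C(a, c) C(a-c, b-c)`; Pascal's rule then adds the two cofactors to
`C(n+t-k, n-k) = C(n+t-k, t)`. With the zero convention these three identities hold on all of `ℤ`,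
Pascal's rule failing only at `C(0, 0)`.
-/

/-- Binomial coefficient for integer arguments: `C a b = a! / (b! (a-b)!)`
for `0 ≤ b ≤ a`, and `0` otherwise. -/
def intChoose (a b : ℤ) : ℤ :=
  if 0 ≤ b ∧ b ≤ a then (a.toNat.choose b.toNat : ℤ) else 0

theorem intChoose_natCast (a b : ℕ) : intChoose a b = a.choose b := by
  unfold intChoose
  split_ifs with h
  · simp
  · rw [Nat.choose_eq_zero_of_lt (by omega), Nat.cast_zero]

theorem intChoose_eq_zero_of_neg {a b : ℤ} (hb : b < 0) : intChoose a b = 0 := by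
  simp [intChoose, hb.not_ge]

theorem intChoose_eq_zero_of_lt {a b : ℤ} (h : a < b) : intChoose a b = 0 := by
  simp [intChoose, h.not_ge]

theorem intChoose_zero_right (a : ℤ) : intChoose a 0 = if 0 ≤ a then 1 else 0 := by
  simp [intChoose]

theorem intChoose_symm (a b : ℤ) : intChoose a (a - b) = intChoose a b := by
  rcases lt_or_ge b 0 with hb | hb
  · rw [intChoose_eq_zero_of_neg hb, intChoose_eq_zero_of_lt (by omega)]
  rcases lt_or_ge a b with hab | hab
  · rw [intChoose_eq_zero_of_lt hab, intChoose_eq_zero_of_neg (by omega)]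
  lift a to ℕ using hb.trans hab
  lift b to ℕ using hb
  norm_cast at hab
  rw [← Nat.cast_sub hab, intChoose_natCast, intChoose_natCast, Nat.choose_symm hab]

theorem intChoose_mul (a b c : ℤ) :
    intChoose a b * intChoose b c = intChoose a c * intChoose (a - c) (b - c) := by
  rcases lt_or_ge c 0 with hc | hc
  · simp [intChoose_eq_zero_of_neg hc]
  rcases lt_or_ge b c with hbc | hbc
  · simp [intChoose_eq_zero_of_lt hbc, intChoose_eq_zero_of_neg (sub_neg.2 hbc)]
  rcases lt_or_ge a b with hab | hab
  · simp [intChoose_eq_zero_of_lt hab, intChoose_eq_zero_of_lt (sub_lt_sub_right hab c)]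
  lift a to ℕ using (hc.trans hbc).trans hab
  lift b to ℕ using hc.trans hbc
  lift c to ℕ using hc
  norm_cast at hbc hab
  rw [← Nat.cast_sub hbc, ← Nat.cast_sub (hbc.trans hab)]
  simp only [intChoose_natCast]
  exact_mod_cast Nat.choose_mul hbc

theorem intChoose_succ_succ {a b : ℤ} (h : a ≠ -1 ∨ b ≠ -1) :
    intChoose (a + 1) (b + 1) = intChoose a b + intChoose a (b + 1) := by
  rcases lt_trichotomy b (-1) with hb | rfl | hb
  · simp [intChoose_eq_zero_of_neg (by omega : b < 0),
      intChoose_eq_zero_of_neg (by omega : b + 1 < 0)]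
  · simp only [neg_add_cancel, intChoose_zero_right, intChoose_eq_zero_of_neg neg_one_lt_zero]
    split_ifs <;> omega
  rcases lt_or_ge a 0 with ha | ha
  · simp [intChoose_eq_zero_of_lt (by omega : a < b),
      intChoose_eq_zero_of_lt (by omega : a < b + 1),
      intChoose_eq_zero_of_lt (by omega : a + 1 < b + 1)]
  lift a to ℕ using ha
  lift b to ℕ using Int.lt_iff_add_one_le.1 hb
  simp only [← Nat.cast_succ, intChoose_natCast, Nat.choose_succ_succ, Nat.cast_add]

theorem binomial_identity_general (n k t : ℤ) :
    intChoose (n + t - 1) n * intChoose n k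
      + intChoose (n + t - 1) (n - 1) * intChoose (n - 1) k
    = intChoose (n + t - k) t * intChoose (n + t - 1) k := by
  by_cases hdeg : t = 0 ∧ k = n
  · -- the one case where Pascal's rule fails; the common factor `intChoose (n - 1) n` vanishes
    obtain ⟨rfl, rfl⟩ := hdeg
    simp [intChoose_eq_zero_of_lt (sub_one_lt k)]
  have pascal := intChoose_succ_succ (a := n + t - 1 - k) (b := n - 1 - k) (by omega)
  rw [show n + t - 1 - k + 1 = n + t - k by ring, show n - 1 - k + 1 = n - k by ring] at pascal
  calc _ = intChoose (n + t - 1) k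
          * (intChoose (n + t - 1 - k) (n - 1 - k) + intChoose (n + t - 1 - k) (n - k)) := by
        rw [intChoose_mul, intChoose_mul]; ring
    _ = intChoose (n + t - k) (n - k) * intChoose (n + t - 1) k := by rw [← pascal, mul_comm]
    _ = _ := by rw [← intChoose_symm (n + t - k) t, show n + t - k - t = n - k by ring]

theorem binomial_identity (n k t : ℤ) (hn : 0 ≤ n) (hk : 0 ≤ k) (ht : 0 ≤ t)
    (hkn : k ≤ n) :
    intChoose (n + t - 1) n * intChoose n k
      + intChoose (n + t - 1) (n - 1) * intChoose (n - 1) k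
    = intChoose (n + t - k) t * intChoose (n + t - 1) k :=
  binomial_identity_general n k t
end

section
/- For m, k, t ≥ 0 with k ≤ m, the number of sequences (c_1,...,c_m) of nonnegative integers satisfying c_1 < c_2 < ... < c_{m-k}, c_{m-k+1} ≤ ... ≤ c_m, and c_i ≤ t+m-k-1 for all i (with additionally c_i ≤ t+i-1 for i ≤ m-k) equals C(m+t-k, t) · C(m+t-1, k). -/
/-- gap lemma: strictly increasing nat sequences grow at least by 1 each step -/
lemma gap_aux {a : ℕ} (f : Fin a → ℕ) (hf : ∀ i j : Fin a, i < j → f i < f j) :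
    ∀ (d : ℕ) (i : Fin a) (h : (i : ℕ) + d < a), f i + d ≤ f ⟨(i : ℕ) + d, h⟩ := by
  intro d
  induction d with
  | zero => intro i h; simpa using le_of_eq (congrArg f (Fin.ext rfl)).symm ▸ le_refl _
  | succ d ih =>
    intro i h
    have h1 : (i : ℕ) + d < a := by omega
    have h2 := ih i h1
    have h3 : f ⟨(i : ℕ) + d, h1⟩ < f ⟨(i : ℕ) + d + 1, by omega⟩ :=
      hf _ _ (by simp [Fin.lt_def])
    have h4 : f ⟨(i : ℕ) + (d + 1), h⟩ = f ⟨(i : ℕ) + d + 1, by omega⟩ := by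
      congr 1
    omega

lemma gap {a : ℕ} (f : Fin a → ℕ) (hf : ∀ i j : Fin a, i < j → f i < f j)
    (i j : Fin a) (hij : (i : ℕ) ≤ j) : f i + ((j : ℕ) - (i : ℕ)) ≤ f j := by
  have h : (i : ℕ) + ((j : ℕ) - (i : ℕ)) < a := by omega
  have := gap_aux f hf ((j : ℕ) - (i : ℕ)) i h
  have hj : (⟨(i : ℕ) + ((j : ℕ) - (i : ℕ)), h⟩ : Fin a) = j := by apply Fin.ext; simp only [Fin.val_mk]; omega
  rwa [hj] at this

/-- Count of strictly increasing sequences of length `a` with values `< N`. -/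
lemma card_SM (a N : ℕ) :
    Nat.card {f : Fin a → ℕ // (∀ i j : Fin a, i < j → f i < f j) ∧ ∀ i, f i < N}
      = N.choose a := by
  have e : {f : Fin a → ℕ // (∀ i j : Fin a, i < j → f i < f j) ∧ ∀ i, f i < N}
      ≃ {s : Finset (Fin N) // s.card = a} := by
    refine ⟨fun f => ⟨Finset.univ.image (fun i => (⟨f.1 i, f.2.2 i⟩ : Fin N)), ?_⟩,
      fun s => ⟨fun i => (s.1.orderEmbOfFin s.2 i : ℕ), ?_, ?_⟩, ?_, ?_⟩
    · have hinj : Function.Injective (fun i => (⟨f.1 i, f.2.2 i⟩ : Fin N)) := by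
        intro i j hij
        have hsm : StrictMono f.1 := fun i j h => f.2.1 i j h
        exact hsm.injective (by simpa [Fin.ext_iff] using hij)
      rw [Finset.card_image_of_injective _ hinj, Finset.card_univ, Fintype.card_fin]
    · intro i j hij
      exact (s.1.orderEmbOfFin s.2).strictMono hij
    · intro i
      exact (s.1.orderEmbOfFin s.2 i).isLt
    · intro f
      ext i
      have hcard : (Finset.univ.image (fun i => (⟨f.1 i, f.2.2 i⟩ : Fin N))).card = a := by
        have hinj : Function.Injective (fun i => (⟨f.1 i, f.2.2 i⟩ : Fin N)) := by
          intro i j hij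
          have hsm : StrictMono f.1 := fun i j h => f.2.1 i j h
          exact hsm.injective (by simpa [Fin.ext_iff] using hij)
        rw [Finset.card_image_of_injective _ hinj, Finset.card_univ, Fintype.card_fin]
      have := Finset.orderEmbOfFin_unique (f := fun i => (⟨f.1 i, f.2.2 i⟩ : Fin N))
        hcard (fun x => Finset.mem_image_of_mem _ (Finset.mem_univ x))
        (fun i j h => by simpa [Fin.lt_def] using f.2.1 i j h)
      simp only
      rw [← congrFun this i]
    · intro s
      apply Subtype.ext
      apply Finset.coe_injective
      push_cast
      simp only [Finset.coe_image, Finset.coe_univ, Set.image_univ]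
      have : (fun i => (⟨(s.1.orderEmbOfFin s.2 i : ℕ), (s.1.orderEmbOfFin s.2 i).isLt⟩ : Fin N))
          = s.1.orderEmbOfFin s.2 := by
        funext i; exact Fin.ext rfl
      rw [this, Finset.range_orderEmbOfFin]
  rw [Nat.card_congr e, Nat.card_eq_fintype_card, Fintype.card_finset_len, Fintype.card_fin]

/-- Count of weakly increasing sequences of length `a` with values `< N`. -/
lemma card_W (a N : ℕ) :
    Nat.card {d : Fin a → ℕ // (∀ i j : Fin a, i ≤ j → d i ≤ d j) ∧ ∀ i, d i < N}
      = (N + a - 1).choose a := by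
  have e : {d : Fin a → ℕ // (∀ i j : Fin a, i ≤ j → d i ≤ d j) ∧ ∀ i, d i < N}
      ≃ {f : Fin a → ℕ // (∀ i j : Fin a, i < j → f i < f j) ∧ ∀ i, f i < N + a - 1} := by
    refine ⟨fun d => ⟨fun i => d.1 i + i, ?_, ?_⟩, fun f => ⟨fun i => f.1 i - i, ?_, ?_⟩, ?_, ?_⟩
    · intro i j hij
      dsimp only
      have := d.2.1 i j (le_of_lt hij)
      have : (i : ℕ) < j := hij
      omega
    · intro i
      dsimp only
      have h1 := d.2.2 i
      have h2 := i.isLt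
      omega
    · intro i j hij
      rcases eq_or_lt_of_le hij with h | h
      · rw [h]
      · dsimp only
        have := gap f.1 f.2.1 i j (le_of_lt h)
        have : (i : ℕ) ≤ j := le_of_lt h
        omega
    · intro i
      have hlast : ((⟨a - 1, by have := i.isLt; omega⟩ : Fin a) : ℕ) = a - 1 := rfl
      have h1 := gap f.1 f.2.1 i ⟨a - 1, by have := i.isLt; omega⟩ (by simp; omega)
      have h2 := f.2.2 ⟨a - 1, by have := i.isLt; omega⟩
      have h3 := i.isLt
      simp only [hlast] at h1
      show f.1 i - (i : ℕ) < N
      have h0 : ((⟨0, by have := i.isLt; omega⟩ : Fin a) : ℕ) = 0 := rfl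
      have h4 := gap f.1 f.2.1 ⟨0, by have := i.isLt; omega⟩ ⟨a - 1, by have := i.isLt; omega⟩
        (by simp)
      simp only [h0, hlast] at h4
      omega
    · intro d; apply Subtype.ext; funext i; simp
    · intro f
      apply Subtype.ext; funext i
      have h0 : ((⟨0, by have := i.isLt; omega⟩ : Fin a) : ℕ) = 0 := rfl
      have := gap f.1 f.2.1 ⟨0, by have := i.isLt; omega⟩ i (by simp)
      simp only [h0] at this
      dsimp only
      omega
  rw [Nat.card_congr e, card_SM]

lemma gap_sub {a : ℕ} (f : Fin a → ℕ) (hf : ∀ i j : Fin a, i < j → f i < f j)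
    (i j : Fin a) (hij : i ≤ j) : f i - (i : ℕ) ≤ f j - (j : ℕ) := by
  have h1 := gap f hf i j hij
  have h2 : (i : ℕ) ≤ j := hij
  omega

lemma ge_idx {a : ℕ} (f : Fin a → ℕ) (hf : ∀ i j : Fin a, i < j → f i < f j)
    (i : Fin a) : (i : ℕ) ≤ f i := by
  have h1 := gap f hf ⟨0, by have := i.isLt; omega⟩ i (by simp)
  have h0 : ((⟨0, by have := i.isLt; omega⟩ : Fin a) : ℕ) = 0 := rfl
  simp only [h0] at h1
  omega

/-- The number of sequences `(c_1,…,c_m)` of nonnegative integers with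
`c_1 < ⋯ < c_{m-k}`, `c_{m-k+1} ≤ ⋯ ≤ c_m`, componentwise bound
`(c_1,…,c_m) ≤ (t, t+1, …, t+m-k-1, t+m-k-1, …, t+m-k-1)` (last value
repeated `k` times), equals `C(m+t-k, t) · C(m+t-1, k)`.
(Indices of `c` are 0-based, so `c i ≤ t + i - 1` at 1-based position
`i + 1` reads `c i ≤ t + i`.) -/
theorem card_I_sequences (m k t : ℕ) (hk : k ≤ m) :
    Nat.card {c : Fin m → ℕ //
      (∀ i j : Fin m, i < j → (j : ℕ) < m - k → c i < c j) ∧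
      (∀ i j : Fin m, m - k ≤ (i : ℕ) → i < j → c i ≤ c j) ∧
      (∀ i : Fin m, (i : ℕ) < m - k → c i ≤ t + (i : ℕ)) ∧
      (∀ i : Fin m, (c i : ℤ) ≤ (t : ℤ) + (m : ℤ) - (k : ℤ) - 1)}
    = Nat.choose (m + t - k) t * Nat.choose (m + t - 1) k := by
  set n := m - k with hn
  have e : {c : Fin m → ℕ //
      (∀ i j : Fin m, i < j → (j : ℕ) < n → c i < c j) ∧
      (∀ i j : Fin m, n ≤ (i : ℕ) → i < j → c i ≤ c j) ∧
      (∀ i : Fin m, (i : ℕ) < n → c i ≤ t + (i : ℕ)) ∧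
      (∀ i : Fin m, (c i : ℤ) ≤ (t : ℤ) + (m : ℤ) - (k : ℤ) - 1)} ≃
      ({d : Fin n → ℕ // (∀ i j : Fin n, i ≤ j → d i ≤ d j) ∧ ∀ i, d i < t + 1} ×
       {e : Fin k → ℕ // (∀ i j : Fin k, i ≤ j → e i ≤ e j) ∧ ∀ i, e i < t + n}) := by
    refine ⟨fun c => ⟨⟨fun i => c.1 ⟨i, by have := i.isLt; omega⟩ - i, ?_, ?_⟩,
        ⟨fun j => c.1 ⟨n + j, by have := j.isLt; omega⟩, ?_, ?_⟩⟩,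
      fun de => ⟨fun i => if h : (i : ℕ) < n then de.1.1 ⟨i, h⟩ + i
        else de.2.1 ⟨(i : ℕ) - n, by have := i.isLt; omega⟩, ?_, ?_, ?_, ?_⟩, ?_, ?_⟩
    · -- monotonicity of d-part
      intro i j hij
      have hgs : ∀ x y : Fin n,
          x < y → (fun x : Fin n => c.1 ⟨x, by have := x.isLt; omega⟩) x
            < (fun x : Fin n => c.1 ⟨x, by have := x.isLt; omega⟩) y := by
        intro x y hxy
        exact c.2.1 ⟨x, by have := x.isLt; omega⟩ ⟨y, by have := y.isLt; omega⟩
          (show (x : ℕ) < (y : ℕ) from hxy) y.isLt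
      exact gap_sub (fun x : Fin n => c.1 ⟨x, by have := x.isLt; omega⟩) hgs i j hij
    · -- bound of d-part
      intro i
      beta_reduce
      suffices H : ∀ p : (i : ℕ) < m, c.1 ⟨(i : ℕ), p⟩ - (i : ℕ) < t + 1 by exact H _
      intro p
      have h2 : c.1 ⟨(i : ℕ), p⟩ ≤ t + (i : ℕ) := c.2.2.2.1 ⟨(i : ℕ), p⟩ i.isLt
      omega
    · -- monotonicity of e-part
      intro i j hij
      rcases eq_or_lt_of_le hij with h | h
      · rw [h]
      · exact c.2.2.1 ⟨n + i, by have := i.isLt; omega⟩ ⟨n + j, by have := j.isLt; omega⟩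
          (show n ≤ n + (i : ℕ) by omega)
          (show n + (i : ℕ) < n + (j : ℕ) by have : (i : ℕ) < j := h; omega)
    · -- bound of e-part
      intro j
      beta_reduce
      suffices H : ∀ p : n + (j : ℕ) < m, c.1 ⟨n + (j : ℕ), p⟩ < t + n by exact H _
      intro p
      have h2 := c.2.2.2.2 ⟨n + (j : ℕ), p⟩
      omega
    · -- strict condition of reconstruction
      intro i j hij hj
      have hij' : (i : ℕ) < (j : ℕ) := hij
      have hi : (i : ℕ) < n := by omega
      beta_reduce
      rw [dif_pos hi, dif_pos hj]
      have h2 : de.1.1 ⟨(i : ℕ), hi⟩ ≤ de.1.1 ⟨(j : ℕ), hj⟩ :=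
        de.1.2.1 ⟨(i : ℕ), hi⟩ ⟨(j : ℕ), hj⟩ (show (i : ℕ) ≤ (j : ℕ) by omega)
      omega
    · -- weak condition of reconstruction
      intro i j hi hij
      have hij' : (i : ℕ) < (j : ℕ) := hij
      beta_reduce
      rw [dif_neg (by omega : ¬ (i : ℕ) < n), dif_neg (by omega : ¬ (j : ℕ) < n)]
      exact de.2.2.1 ⟨(i : ℕ) - n, by have := i.isLt; omega⟩
        ⟨(j : ℕ) - n, by have := j.isLt; omega⟩
        (show (i : ℕ) - n ≤ (j : ℕ) - n by omega)
    · -- bound 3 of reconstruction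
      intro i hi
      beta_reduce
      rw [dif_pos hi]
      have h2 : de.1.1 ⟨(i : ℕ), hi⟩ < t + 1 := de.1.2.2 ⟨(i : ℕ), hi⟩
      omega
    · -- bound 4 of reconstruction
      intro i
      beta_reduce
      by_cases h : (i : ℕ) < n
      · rw [dif_pos h]
        have h2 : de.1.1 ⟨(i : ℕ), h⟩ < t + 1 := de.1.2.2 ⟨(i : ℕ), h⟩
        have h3 : (i : ℕ) < n := h
        push_cast
        omega
      · rw [dif_neg h]
        suffices H : ∀ q : (i : ℕ) - n < k,
            ((de.2.1 ⟨(i : ℕ) - n, q⟩ : ℕ) : ℤ) ≤ (t : ℤ) + (m : ℤ) - (k : ℤ) - 1 by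
          exact H _
        intro q
        have h2 : de.2.1 ⟨(i : ℕ) - n, q⟩ < t + n := de.2.2.2 ⟨(i : ℕ) - n, q⟩
        omega
    · -- left inverse
      intro c
      apply Subtype.ext
      funext i
      dsimp only
      by_cases h : (i : ℕ) < n
      · rw [dif_pos h]
        have hgs : ∀ x y : Fin n,
            x < y → (fun x : Fin n => c.1 ⟨x, by have := x.isLt; omega⟩) x
              < (fun x : Fin n => c.1 ⟨x, by have := x.isLt; omega⟩) y := by
          intro x y hxy
          exact c.2.1 ⟨x, by have := x.isLt; omega⟩ ⟨y, by have := y.isLt; omega⟩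
            (show (x : ℕ) < (y : ℕ) from hxy) y.isLt
        have key : (i : ℕ) ≤ c.1 i :=
          ge_idx (fun x : Fin n => c.1 ⟨x, by have := x.isLt; omega⟩) hgs ⟨(i : ℕ), h⟩
        suffices H : ∀ p : (i : ℕ) < m, c.1 ⟨(i : ℕ), p⟩ - (i : ℕ) + (i : ℕ) = c.1 i by
          exact H _
        intro p
        have : (⟨(i : ℕ), p⟩ : Fin m) = i := Fin.ext rfl
        rw [this]
        omega
      · rw [dif_neg h]
        exact congrArg c.1 (Fin.ext (show n + ((i : ℕ) - n) = (i : ℕ) by omega))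
    · -- right inverse
      intro de
      refine Prod.ext ?_ ?_
      · apply Subtype.ext
        funext i
        dsimp only
        rw [dif_pos i.isLt]
        simp only [Fin.eta]
        omega
      · apply Subtype.ext
        funext j
        dsimp only
        rw [dif_neg (by omega : ¬ n + (j : ℕ) < n)]
        exact congrArg de.2.1 (Fin.ext (show n + (j : ℕ) - n = (j : ℕ) by omega))
  rw [Nat.card_congr e, Nat.card_prod, card_W, card_W]
  have h1 : t + 1 + n - 1 = m + t - k := by omega
  have h2 : t + n + k - 1 = m + t - 1 := by omega
  rw [h1, h2]
  congr 1
  have h3 : n ≤ m + t - k := by omega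
  have h4 : m + t - k - n = t := by omega
  rw [← Nat.choose_symm h3, h4]
end

section
/- Let J ⊆ [n] and define the J-staircase st(J) = (st(J)_1,...,st(J)_n) by st(J)_1 = 0 if 1 ∈ J and 1 otherwise, and st(J)_i = st(J)_{i-1} if i ∈ J and st(J)_{i-1}+1 otherwise. Then ∑_{J⊆[n]} ∏_{i=1}^n st(J)_i equals the number of ordered set partitions of [n], i.e. ∑_{k} k!·S(n,k). -/
/-- Stirling numbers of the second kind. -/
def stirling : ℕ → ℕ → ℕ
  | 0, 0 => 1
  | 0, _ + 1 => 0
  | _ + 1, 0 => 0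
  | n + 1, k + 1 => stirling n k + (k + 1) * stirling n (k + 1)

/-- The `J`-staircase: `st(J)_1 = 0` if `1 ∈ J` and `1` otherwise, and
`st(J)_i = st(J)_{i-1}` if `i ∈ J`, `st(J)_{i-1} + 1` otherwise.
(`st J 0 = 0` is a dummy value; positions are 1-indexed.) -/
def st (J : Finset ℕ) : ℕ → ℕ
  | 0 => 0
  | i + 1 => st J i + (if i + 1 ∈ J then 0 else 1)

lemma st_congr (J K : Finset ℕ) : ∀ i, (∀ j, j ≤ i → (j ∈ J ↔ j ∈ K)) → st J i = st K i
  | 0, _ => rfl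
  | i + 1, h => by
    simp only [st]
    rw [st_congr J K i (fun j hj => h j (hj.trans (Nat.le_succ i)))]
    simp only [h (i + 1) le_rfl]

lemma st_le (J : Finset ℕ) : ∀ i, st J i ≤ i
  | 0 => le_rfl
  | i + 1 => by
    have := st_le J i
    simp only [st]
    split <;> omega

lemma key (n : ℕ) : ∀ m, (∑ J ∈ (Finset.Icc 1 n).powerset,
    if st J n = m then ∏ i ∈ Finset.Icc 1 n, st J i else 0)
    = m.factorial * stirling n m := by
  induction n with
  | zero =>
    intro m
    cases m <;> simp [st, stirling]
  | succ n ih =>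
    intro m
    have hins : Finset.Icc 1 (n + 1) = insert (n + 1) (Finset.Icc 1 n) := by
      ext x; simp [Finset.mem_Icc]; omega
    have hnot : n + 1 ∉ Finset.Icc 1 n := by simp
    rw [hins, Finset.sum_powerset_insert hnot]
    have h1 : ∀ J ∈ (Finset.Icc 1 n).powerset,
        (if st J (n + 1) = m then ∏ i ∈ insert (n + 1) (Finset.Icc 1 n), st J i else 0)
        = (if st J n + 1 = m then (st J n + 1) * ∏ i ∈ Finset.Icc 1 n, st J i else 0) := by
      intro J hJ
      have hJn : n + 1 ∉ J := fun h => by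
        have := Finset.mem_powerset.1 hJ h; simp [Finset.mem_Icc] at this
      have hst : st J (n + 1) = st J n + 1 := by simp [st, hJn]
      rw [Finset.prod_insert hnot, hst]
    have h2 : ∀ J ∈ (Finset.Icc 1 n).powerset,
        (if st (insert (n + 1) J) (n + 1) = m then
            ∏ i ∈ insert (n + 1) (Finset.Icc 1 n), st (insert (n + 1) J) i else 0)
        = (if st J n = m then st J n * ∏ i ∈ Finset.Icc 1 n, st J i else 0) := by
      intro J hJ
      have heq : ∀ i ≤ n, st (insert (n + 1) J) i = st J i := fun i hi =>
        st_congr _ _ i (fun j hj => by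
          simp only [Finset.mem_insert]
          constructor
          · rintro (rfl | h); · omega
            · exact h
          · exact Or.inr)
      have hst : st (insert (n + 1) J) (n + 1) = st J n := by
        simp [st, heq n le_rfl]
      rw [Finset.prod_insert hnot, hst, Finset.prod_congr rfl
        (fun i hi => heq i (Finset.mem_Icc.1 hi).2)]
    rw [Finset.sum_congr rfl h1, Finset.sum_congr rfl h2]
    cases m with
    | zero =>
      rw [Finset.sum_eq_zero (fun J _ => by simp),
        Finset.sum_eq_zero (fun J _ => by split <;> simp_all)]
      simp [stirling]
    | succ k =>
      have e1 : (∑ J ∈ (Finset.Icc 1 n).powerset,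
          if st J n + 1 = k + 1 then (st J n + 1) * ∏ i ∈ Finset.Icc 1 n, st J i else 0)
          = (k + 1) * ∑ J ∈ (Finset.Icc 1 n).powerset,
            (if st J n = k then ∏ i ∈ Finset.Icc 1 n, st J i else 0) := by
        rw [Finset.mul_sum]
        refine Finset.sum_congr rfl fun J _ => ?_
        by_cases h : st J n = k <;> simp [h]
      have e2 : (∑ J ∈ (Finset.Icc 1 n).powerset,
          if st J n = k + 1 then st J n * ∏ i ∈ Finset.Icc 1 n, st J i else 0)
          = (k + 1) * ∑ J ∈ (Finset.Icc 1 n).powerset,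
            (if st J n = k + 1 then ∏ i ∈ Finset.Icc 1 n, st J i else 0) := by
        rw [Finset.mul_sum]
        refine Finset.sum_congr rfl fun J _ => ?_
        by_cases h : st J n = k + 1 <;> simp [h]
      rw [e1, e2, ih k, ih (k + 1)]
      simp only [stirling, Nat.factorial_succ]
      ring

/-- `∑_{J ⊆ [n]} ∏_{i=1}^n st(J)_i` equals the number of ordered set
partitions of `[n]`, i.e. `∑_k k! · S(n,k)`. -/
theorem sum_staircase_products (n : ℕ) :
    ∑ J ∈ (Finset.Icc 1 n).powerset, ∏ i ∈ Finset.Icc 1 n, st J i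
      = ∑ k ∈ Finset.range (n + 1), k.factorial * stirling n k := by
  have h : ∀ J ∈ (Finset.Icc 1 n).powerset, ∏ i ∈ Finset.Icc 1 n, st J i
      = ∑ m ∈ Finset.range (n + 1),
        (if st J n = m then ∏ i ∈ Finset.Icc 1 n, st J i else 0) := by
    intro J _
    rw [Finset.sum_ite_eq]
    simp [Nat.lt_succ_of_le (st_le J n)]
  rw [Finset.sum_congr rfl h, Finset.sum_comm]
  exact Finset.sum_congr rfl fun m _ => key n m
end

section
/- Fix a partition μ = (μ_1,...,μ_p) of n and let OP_n(μ) be the set of ordered set partitions of [n] in which, for each j, the elements of the j-th batch {μ_1+...+μ_{j-1}+1, ..., μ_1+...+μ_j} appear in increasing order when reading the ordered set partition from left to right (reading within each block in increasing order). Then #OP_n(μ) = ∑_{0 ≤ γ ≤ μ} ∏_{j=1}^p C((μ_1-γ_1)+...+(μ_j-γ_j), μ_j-γ_j) · C((μ_1-γ_1)+...+(μ_{j-1}-γ_{j-1})+μ_j-1, γ_j), where the sum is over integer sequences γ with 0 ≤ γ_j ≤ μ_j for all j. -/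
/-- The index (0-based) of the batch (interval of `μ = (μ_1,…,μ_p)`)
containing the (0-based) position `i`. -/
noncomputable def batchOf (p : ℕ) (μ : Fin p → ℕ) (i : ℕ) : ℕ :=
  sInf {j : ℕ | i < ∑ l ∈ Finset.range (j + 1), if h : l < p then μ ⟨l, h⟩ else 0}

/-!
Recording for each element the index of its block turns an ordered set partition with `k` blocks
into a surjection `f : [n] → [k]`, and the batch condition says that `f` is weakly increasing on
each batch. A weakly increasing map on the `j`-th batch is determined by its fibre sizes, so these
surjections correspond to `p × k` matrices over `ℕ` with row sums `μ_j` and no zero column.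
Such matrices are counted by adding the rows one at a time: if the first `j - 1` rows occupy
`S_{j-1}` columns and row `j` opens `μ_j - γ_j` new ones, there are `C(S_j, μ_j - γ_j)` ways to
place the new columns among the `S_j` columns now in use, and, after one unit is put in each new
column, `C(S_{j-1} + μ_j - 1, γ_j)` ways to spread the remaining `γ_j` units over those columns.
-/

open Finset

variable {p : ℕ}

section OrderedPartitions

variable {α : Type*} [DecidableEq α]

theorem List.findIdx_mem_eq_of_mem {L : List (Finset α)} (hL : L.Pairwise _root_.Disjoint)
    {i : ℕ} (hi : i < L.length) {x : α} (hx : x ∈ L[i]) :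
    L.findIdx (fun B => decide (x ∈ B)) = i := by
  refine (List.findIdx_eq hi).2 ⟨by simpa using hx, fun j hji => ?_⟩
  have := List.pairwise_iff_getElem.1 hL j i (hji.trans hi) hi hji
  simpa using Finset.disjoint_right.1 this hx

def fiberList [Fintype α] {k : ℕ} (f : α → Fin k) : List (Finset α) :=
  List.ofFn fun i => ({y | f y = i} : Finset α)

omit [DecidableEq α] in
theorem pairwise_disjoint_fiberList [Fintype α] {k : ℕ} (f : α → Fin k) :
    (fiberList f).Pairwise Disjoint :=
  List.pairwise_ofFn.2 fun _ _ hij => Finset.disjoint_filter.2 fun _ _ hi hj => hij.ne (hi ▸ hj)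

theorem findIdx_mem_fiberList [Fintype α] {k : ℕ} (f : α → Fin k) (x : α) :
    (fiberList f).findIdx (fun B => decide (x ∈ B)) = f x :=
  List.findIdx_mem_eq_of_mem (pairwise_disjoint_fiberList f) (by simp [fiberList])
    (by simp [fiberList])

variable {L : List (Finset α)}

theorem findIdx_mem_lt_length {x : α} (hx : ∃ B ∈ L, x ∈ B) :
    L.findIdx (fun B => decide (x ∈ B)) < L.length :=
  List.findIdx_lt_length_of_exists (by simpa using hx)

theorem mem_getElem_findIdx_mem {x : α} (hx : ∃ B ∈ L, x ∈ B) :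
    x ∈ L[L.findIdx (fun B => decide (x ∈ B))]'(findIdx_mem_lt_length hx) := by
  simpa using List.findIdx_getElem (w := findIdx_mem_lt_length hx)

theorem exists_findIdx_mem_eq (hne : ∀ B ∈ L, B.Nonempty) (hdisj : L.Pairwise Disjoint) {i : ℕ}
    (hi : i < L.length) : ∃ x, L.findIdx (fun B => decide (x ∈ B)) = i :=
  (hne _ (L.getElem_mem hi)).imp fun _ hx => List.findIdx_mem_eq_of_mem hdisj hi hx

theorem List.length_le_card_of_pairwise_disjoint [Fintype α] (hne : ∀ B ∈ L, B.Nonempty)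
    (hdisj : L.Pairwise _root_.Disjoint)
    (hcov : ∀ x, ∃ B ∈ L, x ∈ B) : L.length ≤ Fintype.card α := by
  have hsurj : Function.Surjective fun x =>
      (⟨L.findIdx (fun B => decide (x ∈ B)), findIdx_mem_lt_length (hcov x)⟩ : Fin L.length) :=
    fun i => (exists_findIdx_mem_eq hne hdisj i.2).imp fun _ hx => Fin.ext hx
  simpa using Fintype.card_le_of_surjective _ hsurj

def orderedPartitionEquiv [Fintype α] (Q : (α → ℕ) → Prop) :
    {L : List (Finset α) // (∀ B ∈ L, B.Nonempty) ∧ L.Pairwise Disjoint ∧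
      (∀ x, ∃ B ∈ L, x ∈ B) ∧ Q fun x => L.findIdx fun B => decide (x ∈ B)} ≃
    {kf : Fin (Fintype.card α + 1) × (α → ℕ) //
      (∀ x, kf.2 x < kf.1) ∧ (∀ i < (kf.1 : ℕ), ∃ x, kf.2 x = i) ∧ Q kf.2} where
  toFun L := ⟨(⟨L.1.length, Nat.lt_succ_of_le
        (List.length_le_card_of_pairwise_disjoint L.2.1 L.2.2.1 L.2.2.2.1)⟩,
      fun x => L.1.findIdx fun B => decide (x ∈ B)),
    fun x => findIdx_mem_lt_length (L.2.2.2.1 x),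
    fun _ hi => exists_findIdx_mem_eq L.2.1 L.2.2.1 hi, L.2.2.2.2⟩
  invFun kf :=
    ⟨fiberList fun y => (⟨kf.1.2 y, kf.2.1 y⟩ : Fin kf.1.1),
      by
        simp only [fiberList, List.mem_ofFn, forall_exists_index, forall_apply_eq_imp_iff]
        intro i
        obtain ⟨x, hx⟩ := kf.2.2.1 i i.2
        exact ⟨x, by simp [Fin.ext_iff, hx]⟩,
      pairwise_disjoint_fiberList _,
      fun x => ⟨_, List.mem_ofFn.2 ⟨⟨kf.1.2 x, kf.2.1 x⟩, rfl⟩, by simp⟩,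
      by simpa only [findIdx_mem_fiberList] using kf.2.2.2⟩
  left_inv L := by
    refine Subtype.ext (List.ext_getElem (by simp [fiberList]) fun i _ h => Finset.ext fun x => ?_)
    simp only [fiberList, List.getElem_ofFn, mem_filter, mem_univ, true_and, Fin.ext_iff]
    constructor
    · rintro rfl
      exact mem_getElem_findIdx_mem (L.2.2.2.1 x)
    · exact List.findIdx_mem_eq_of_mem L.2.2.1 h
  right_inv kf := by
    refine Subtype.ext (Prod.ext (Fin.ext (by simp [fiberList])) (funext fun x => ?_))
    exact findIdx_mem_fiberList (fun y => ⟨kf.1.2 y, kf.2.1 y⟩) x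

def boundedSurjectionEquiv (Q : (α → ℕ) → Prop) (k : ℕ) :
    {f : α → ℕ // (∀ x, f x < k) ∧ (∀ i < k, ∃ x, f x = i) ∧ Q f} ≃
      {f : α → Fin k // Function.Surjective f ∧ Q fun x => f x} where
  toFun f := ⟨fun x => ⟨f.1 x, f.2.1 x⟩,
    fun i => (f.2.2.1 i i.2).imp fun _ hx => Fin.ext hx, f.2.2.2⟩
  invFun f := ⟨fun x => f.1 x, fun x => (f.1 x).2,
    fun i hi => (f.2.1 ⟨i, hi⟩).imp fun _ hx => congrArg Fin.val hx, f.2.2⟩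
  left_inv _ := rfl
  right_inv _ := rfl

theorem card_orderedPartitions_eq_sum_card_surjective [Fintype α] (Q : (α → ℕ) → Prop) :
    Nat.card {L : List (Finset α) // (∀ B ∈ L, B.Nonempty) ∧ L.Pairwise Disjoint ∧
      (∀ x, ∃ B ∈ L, x ∈ B) ∧ Q fun x => L.findIdx fun B => decide (x ∈ B)} =
    ∑ k ∈ range (Fintype.card α + 1),
      Nat.card {f : α → Fin k // Function.Surjective f ∧ Q fun x => f x} := by
  rw [← Fin.sum_univ_eq_sum_range
    (fun k => Nat.card {f : α → Fin k // Function.Surjective f ∧ Q fun x => f x}), ← Nat.card_sigma]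
  exact Nat.card_congr ((orderedPartitionEquiv Q).trans
    ((Equiv.subtypeProdEquivSigmaSubtype fun (k : Fin _) (f : α → ℕ) =>
      (∀ x, f x < k) ∧ (∀ i < (k : ℕ), ∃ x, f x = i) ∧ Q f).trans
      (Equiv.sigmaCongrRight fun k => boundedSurjectionEquiv Q k)))

end OrderedPartitions

section Monotone

variable {α : Type*} [LinearOrder α] {m : ℕ}

def monotoneToSym (g : {g : Fin m → α // Monotone g}) : Sym α m :=
  ⟨univ.val.map g.1, by simp⟩

theorem monotoneToSym_bijective : Function.Bijective (monotoneToSym (α := α) (m := m)) := by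
  constructor
  · rintro ⟨g, hg⟩ ⟨g', hg'⟩ h
    have hperm : (List.ofFn g).Perm (List.ofFn g') := by
      simpa [monotoneToSym, Fin.univ_val_map] using congrArg Subtype.val h
    exact Subtype.ext (List.ofFn_injective
      (hperm.eq_of_pairwise' hg.sortedLE_ofFn.pairwise hg'.sortedLE_ofFn.pairwise))
  · intro s
    set l := (s : Multiset α).sort with hl
    have hlen : l.length = m := by simp [l]
    have hofFn : List.ofFn (fun j : Fin m => l[j.cast hlen.symm]) = l := by
      rw [List.ofFn_congr hlen.symm]
      exact List.ofFn_getElem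
    refine ⟨⟨fun j => l[j.cast hlen.symm], ?_⟩, Subtype.ext ?_⟩
    · rw [← List.sortedLE_ofFn_iff, hofFn]
      exact (Multiset.pairwise_sort (r := fun a b : α => a ≤ b) (s : Multiset α)).sortedLE
    · change Multiset.map (fun j : Fin m => l[j.cast hlen.symm]) univ.val = (s : Multiset α)
      rw [Fin.univ_val_map, hofFn, hl, Multiset.sort_eq]

variable (α m) in
noncomputable def monotoneEquivFiberCard [Fintype α] [DecidableEq α] :
    {g : Fin m → α // Monotone g} ≃ {c : α → ℕ // ∑ i, c i = m} :=
  (Equiv.ofBijective _ monotoneToSym_bijective).trans (Sym.equivNatSumOfFintype α m)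

theorem monotoneEquivFiberCard_apply [Fintype α] [DecidableEq α]
    (g : {g : Fin m → α // Monotone g}) (i : α) :
    (monotoneEquivFiberCard α m g : α → ℕ) i = #{x | g.1 x = i} := by
  rw [monotoneEquivFiberCard, Equiv.trans_apply, Sym.coe_equivNatSumOfFintype_apply_apply]
  change Multiset.count i (univ.val.map g.1) = _
  rw [Multiset.count_map]
  simp only [eq_comm, Finset.card, Finset.filter_val]

end Monotone

theorem batchOf_finSigmaFinEquiv (μ : Fin p → ℕ) (j : Fin p) (x : Fin (μ j)) :
    batchOf p μ (finSigmaFinEquiv ⟨j, x⟩ : ℕ) = j := by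
  obtain ⟨P, hP⟩ : ∃ P : ℕ → ℕ, P = fun t => ∑ l ∈ range t, if h : l < p then μ ⟨l, h⟩ else 0 :=
    ⟨_, rfl⟩
  have hbatch : ∀ v, batchOf p μ v = sInf {t | v < P (t + 1)} := by subst hP; exact fun _ => rfl
  have hP_mono : Monotone P := by
    subst hP; exact fun s t hst => sum_le_sum_of_subset (range_subset_range.2 hst)
  have hP_succ : P (j + 1) = P j + μ j := by subst hP; simp only [sum_range_succ, dif_pos j.2]
  have hP_fin : ∑ i : Fin j, μ (Fin.castLE j.2.le i) = P j := by
    simp only [hP]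
    rw [← Fin.sum_univ_eq_sum_range (fun l => if h : l < p then μ ⟨l, h⟩ else 0) j]
    exact sum_congr rfl fun i _ => by rw [dif_pos (i.2.trans j.2)]; rfl
  rw [finSigmaFinEquiv_apply, hP_fin, hbatch]
  dsimp only
  have hj : P j + x < P (j + 1) := by omega
  refine le_antisymm (Nat.sInf_le hj) (le_csInf ⟨j, hj⟩ fun t ht => ?_)
  by_contra! htj
  have := hP_mono (show t + 1 ≤ j by omega)
  have ht : _ < P (t + 1) := ht
  omega

section Batches

variable {n : ℕ} (μ : Fin p → ℕ) (hsum : ∑ j, μ j = n)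

def batchEquiv : (Σ j : Fin p, Fin (μ j)) ≃ Fin n :=
  finSigmaFinEquiv.trans (finCongr hsum)

theorem batchOf_batchEquiv (j : Fin p) (x : Fin (μ j)) :
    batchOf p μ (batchEquiv μ hsum ⟨j, x⟩ : ℕ) = j :=
  batchOf_finSigmaFinEquiv μ j x

theorem batchEquiv_lt_batchEquiv_iff (j : Fin p) (x y : Fin (μ j)) :
    (batchEquiv μ hsum ⟨j, x⟩ : ℕ) < batchEquiv μ hsum ⟨j, y⟩ ↔ x < y := by
  simp only [batchEquiv, Equiv.trans_apply, finCongr_apply, Fin.val_cast, finSigmaFinEquiv_apply,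
    Nat.add_lt_add_iff_left, Fin.val_fin_lt]

theorem batchMonotone_iff_forall_monotone {β : Type*} [Preorder β] (f : Fin n → β) :
    (∀ a b : Fin n, batchOf p μ a = batchOf p μ b → (a : ℕ) < b → f a ≤ f b) ↔
      ∀ j, Monotone fun x : Fin (μ j) => f (batchEquiv μ hsum ⟨j, x⟩) := by
  refine ⟨fun hf j => monotone_iff_forall_lt.2 fun x y hxy => ?_, fun hf a b hab hlt => ?_⟩
  · exact hf _ _ (by rw [batchOf_batchEquiv, batchOf_batchEquiv])
      ((batchEquiv_lt_batchEquiv_iff μ hsum j x y).2 hxy)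
  · obtain ⟨⟨j, x⟩, rfl⟩ := (batchEquiv μ hsum).surjective a
    obtain ⟨⟨j', y⟩, rfl⟩ := (batchEquiv μ hsum).surjective b
    rw [batchOf_batchEquiv, batchOf_batchEquiv] at hab
    obtain rfl := Fin.ext hab
    exact hf j ((batchEquiv_lt_batchEquiv_iff μ hsum j x y).1 hlt).le

end Batches

/-- Row `j` of the matrix attached to an ordered set partition counts the elements of batch `j`
in each block. -/
def coveringMatrices (μ : Fin p → ℕ) (ι : Type*) [Fintype ι] : Set (Fin p → ι → ℕ) :=
  {M | (∀ j, ∑ i, M j i = μ j) ∧ ∀ i, ∃ j, M j i ≠ 0}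

section Families

variable {β : Type*} [LinearOrder β] [Fintype β] [DecidableEq β] (μ : Fin p → ℕ)

noncomputable def monotoneFamilyEquiv :
    {g : (j : Fin p) → Fin (μ j) → β // ∀ j, Monotone (g j)} ≃
      {M : Fin p → β → ℕ // ∀ j, ∑ i, M j i = μ j} :=
  Equiv.subtypePiEquivPi.trans
    ((Equiv.piCongrRight fun j => monotoneEquivFiberCard β (μ j)).trans
      Equiv.subtypePiEquivPi.symm)

theorem monotoneFamilyEquiv_apply (g : {g : (j : Fin p) → Fin (μ j) → β // ∀ j, Monotone (g j)})
    (j : Fin p) (i : β) : (monotoneFamilyEquiv μ g : Fin p → β → ℕ) j i = #{x | g.1 j x = i} :=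
  monotoneEquivFiberCard_apply ⟨g.1 j, g.2 j⟩ i

theorem card_monotoneFamilies_eq_card_coveringMatrices :
    Nat.card {g : (j : Fin p) → Fin (μ j) → β // (∀ j, Monotone (g j)) ∧ ∀ i, ∃ j x, g j x = i} =
      Nat.card (coveringMatrices μ β) := by
  calc _ = Nat.card {g : {g : (j : Fin p) → Fin (μ j) → β // ∀ j, Monotone (g j)} //
          ∀ i, ∃ j x, g.1 j x = i} :=
        (Nat.card_congr (Equiv.subtypeSubtypeEquivSubtypeInter _ _)).symm
    _ = Nat.card {M : {M : Fin p → β → ℕ // ∀ j, ∑ i, M j i = μ j} // ∀ i, ∃ j, M.1 j i ≠ 0} :=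
        Nat.card_congr <| (monotoneFamilyEquiv μ).subtypeEquiv fun g => by
          simp [monotoneFamilyEquiv_apply]
    _ = _ := Nat.card_congr (Equiv.subtypeSubtypeEquivSubtypeInter
          (fun M : Fin p → β → ℕ => ∀ j, ∑ i, M j i = μ j) fun M => ∀ i, ∃ j, M j i ≠ 0)

end Families

theorem card_batchMonotone_surjective_eq_card_coveringMatrices {n : ℕ} (μ : Fin p → ℕ)
    (hsum : ∑ j, μ j = n) (k : ℕ) :
    Nat.card {f : Fin n → Fin k // Function.Surjective f ∧
      ∀ a b : Fin n, batchOf p μ a = batchOf p μ b → (a : ℕ) < b → (f a : ℕ) ≤ f b} =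
    Nat.card (coveringMatrices μ (Fin k)) := by
  let e : (Fin n → Fin k) ≃ ((j : Fin p) → Fin (μ j) → Fin k) :=
    ((batchEquiv μ hsum).arrowCongr (Equiv.refl _)).symm.trans (Equiv.piCurry fun _ _ => Fin k)
  rw [← card_monotoneFamilies_eq_card_coveringMatrices]
  refine Nat.card_congr (e.subtypeEquiv fun f => ?_)
  simp only [← Fin.le_def]
  rw [and_comm, batchMonotone_iff_forall_monotone μ hsum f]
  simp only [Function.Surjective, (batchEquiv μ hsum).surjective.exists, Sigma.exists]
  rfl

section Counting

variable {ι : Type*} [Fintype ι] [DecidableEq ι]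

instance (m : ℕ) : Finite {c : ι → ℕ // ∑ i, c i = m} :=
  Finite.of_equiv _ (Sym.equivNatSumOfFintype ι m)

theorem card_sum_eq_choose (m : ℕ) :
    Nat.card {c : ι → ℕ // ∑ i, c i = m} = (Fintype.card ι + m - 1).choose m := by
  rw [← Nat.card_congr (Sym.equivNatSumOfFintype ι m), Nat.card_eq_fintype_card,
    Sym.card_sym_eq_choose]

instance (μ : Fin p → ℕ) : Finite (coveringMatrices μ ι) :=
  Finite.of_injective (fun M j => (⟨M.1 j, M.2.1 j⟩ : {c : ι → ℕ // ∑ i, c i = μ j}))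
    fun _ _ h => Subtype.ext (funext fun j => congrArg Subtype.val (congrFun h j))

theorem card_sum_eq_of_ne_zero_on (m : ℕ) (B : Finset ι) :
    Nat.card {r : ι → ℕ // ∑ i, r i = m ∧ ∀ i ∈ B, r i ≠ 0} =
      if #B ≤ m then (Fintype.card ι + (m - #B) - 1).choose (m - #B) else 0 := by
  set e : ι → ℕ := fun i => if i ∈ B then 1 else 0 with he
  have hsum_e : ∑ i, e i = #B := by simp [he]
  have hsub_add {r : ι → ℕ} (hr : ∀ i ∈ B, r i ≠ 0) : ∀ i, r i - e i + e i = r i := by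
    intro i
    by_cases hi : i ∈ B
    · have := hr i hi
      simp only [he, if_pos hi]
      omega
    · simp [he, hi]
  split_ifs with hB
  · rw [← card_sum_eq_choose]
    refine Nat.card_congr
      { toFun r := ⟨fun i => r.1 i - e i, ?_⟩
        invFun c := ⟨fun i => c.1 i + e i, by rw [sum_add_distrib, c.2, hsum_e]; omega,
          fun i hi => by simp [he, hi]⟩
        left_inv r := Subtype.ext (funext (hsub_add r.2.2))
        right_inv c := Subtype.ext (funext fun i => Nat.add_sub_cancel _ _) }
    have : ∑ i, (r.1 i - e i) + #B = m := by
      rw [← hsum_e, ← sum_add_distrib, sum_congr rfl fun i _ => hsub_add r.2.2 i, r.2.1]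
    change ∑ i, (r.1 i - e i) = m - #B
    omega
  · refine Nat.card_eq_zero.2 (.inl ⟨fun r => hB ?_⟩)
    calc #B = ∑ i ∈ B, 1 := by simp
      _ ≤ ∑ i ∈ B, r.1 i := sum_le_sum fun i hi => Nat.one_le_iff_ne_zero.2 (r.2.2 i hi)
      _ ≤ ∑ i, r.1 i := sum_le_sum_of_subset (subset_univ B)
      _ = m := r.2.1

def nonzeroCols (M : Fin p → ι → ℕ) : Finset ι :=
  {i | ∃ j, M j i ≠ 0}

omit [DecidableEq ι] in
theorem sum_eq_sum_subtype_of_notMem_eq_zero {A : Finset ι} {f : ι → ℕ}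
    (hf : ∀ i ∉ A, f i = 0) : ∑ i, f i = ∑ i : A, f i := by
  rw [sum_coe_sort A f]
  exact (sum_subset (subset_univ A) fun i _ hi => hf i hi).symm

def restrictNonzeroColsEquiv (μ : Fin p → ℕ) (A : Finset ι) :
    {M : Fin p → ι → ℕ // (∀ j, ∑ i, M j i = μ j) ∧ nonzeroCols M = A} ≃
      coveringMatrices μ A where
  toFun M := ⟨fun j i => M.1 j i,
    fun j => by
      rw [← M.2.1 j, sum_eq_sum_subtype_of_notMem_eq_zero (A := A) fun i hi => ?_]
      simp only [← M.2.2, nonzeroCols, mem_filter, mem_univ, true_and, not_exists,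
        not_not] at hi
      exact hi j,
    fun i => by simpa [← M.2.2, nonzeroCols] using i.2⟩
  invFun N := ⟨fun j i => if h : i ∈ A then N.1 j ⟨i, h⟩ else 0,
    fun j => by
      rw [sum_eq_sum_subtype_of_notMem_eq_zero (A := A) fun i hi => dif_neg hi, ← N.2.1 j]
      exact sum_congr rfl fun i _ => dif_pos i.2,
    by
      ext i
      by_cases hi : i ∈ A
      · simpa [nonzeroCols, hi] using N.2.2 ⟨i, hi⟩
      · simp [nonzeroCols, hi]⟩
  left_inv M := by
    refine Subtype.ext (funext₂ fun j i => ?_)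
    by_cases hi : i ∈ A
    · simp [hi]
    · rw [← M.2.2] at hi
      simp_all [nonzeroCols]
  right_inv N := by
    ext j i
    simp

def lastRowEquiv (μ : Fin (p + 1) → ℕ) (A : Finset ι) :
    {M : coveringMatrices μ ι // nonzeroCols (Fin.init M.1) = A} ≃
      {M : Fin p → ι → ℕ // (∀ j, ∑ i, M j i = Fin.init μ j) ∧ nonzeroCols M = A} ×
        {r : ι → ℕ // ∑ i, r i = μ (Fin.last p) ∧ ∀ i ∈ Aᶜ, r i ≠ 0} where
  toFun M := (⟨Fin.init M.1.1, fun j => M.1.2.1 j.castSucc, M.2⟩,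
    ⟨M.1.1 (Fin.last p), M.1.2.1 _, fun i hi => by
      obtain ⟨j, hj⟩ := M.1.2.2 i
      rw [← M.2] at hi
      simp only [nonzeroCols, mem_compl, mem_filter, mem_univ, true_and, not_exists,
        not_not] at hi
      induction j using Fin.lastCases with
      | last => exact hj
      | cast j => exact absurd (hi j) hj⟩)
  invFun Mr := ⟨⟨Fin.snoc Mr.1.1 Mr.2.1,
    fun j => by
      induction j using Fin.lastCases with
      | last => simpa using Mr.2.2.1
      | cast j => simpa [Fin.init] using Mr.1.2.1 j,
    fun i => by
      by_cases hi : i ∈ A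
      · rw [← Mr.1.2.2] at hi
        obtain ⟨j, hj⟩ := by simpa [nonzeroCols] using hi
        exact ⟨j.castSucc, by simpa using hj⟩
      · exact ⟨Fin.last p, by simpa using Mr.2.2.2 i (mem_compl.2 hi)⟩⟩,
    by simpa [Fin.init_snoc] using Mr.1.2.2⟩
  left_inv M := by simp
  right_inv Mr := by simp

theorem card_coveringMatrices_succ (μ : Fin (p + 1) → ℕ) :
    Nat.card (coveringMatrices μ ι) = ∑ A : Finset ι,
      Nat.card (coveringMatrices (Fin.init μ) A) *
        Nat.card {r : ι → ℕ // ∑ i, r i = μ (Fin.last p) ∧ ∀ i ∈ Aᶜ, r i ≠ 0} := by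
  rw [← Nat.card_congr (Equiv.sigmaFiberEquiv fun M : coveringMatrices μ ι =>
    nonzeroCols (Fin.init M.1)), Nat.card_sigma]
  refine sum_congr rfl fun A _ => ?_
  rw [Nat.card_congr (lastRowEquiv μ A), Nat.card_prod,
    Nat.card_congr (restrictNonzeroColsEquiv _ A)]

end Counting

def insertionWeight (μ : Fin p → ℕ) (γ : (j : Fin p) → Fin (μ j + 1)) : ℕ :=
  ∏ j : Fin p,
    Nat.choose (∑ l ∈ univ.filter (fun l : Fin p => l ≤ j), (μ l - (γ l : ℕ))) (μ j - (γ j : ℕ)) *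
      Nat.choose ((∑ l ∈ univ.filter (fun l : Fin p => l < j), (μ l - (γ l : ℕ))) + μ j - 1)
        (γ j : ℕ)

theorem val_snoc_castSucc (μ : Fin (p + 1) → ℕ) (γ : (j : Fin p) → Fin (Fin.init μ j + 1))
    (a : Fin (μ (Fin.last p) + 1)) (j : Fin p) :
    (Fin.snoc (α := fun j => Fin (μ j + 1)) γ a j.castSucc : ℕ) = γ j :=
  congrArg Fin.val (Fin.snoc_castSucc (α := fun j => Fin (μ j + 1)) ..)

theorem val_snoc_last (μ : Fin (p + 1) → ℕ) (γ : (j : Fin p) → Fin (Fin.init μ j + 1))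
    (a : Fin (μ (Fin.last p) + 1)) :
    (Fin.snoc (α := fun j => Fin (μ j + 1)) γ a (Fin.last p) : ℕ) = a :=
  congrArg Fin.val (Fin.snoc_last (α := fun j => Fin (μ j + 1)) ..)

theorem insertionWeight_snoc (μ : Fin (p + 1) → ℕ) (γ : (j : Fin p) → Fin (Fin.init μ j + 1))
    (a : Fin (μ (Fin.last p) + 1)) :
    insertionWeight μ (Fin.snoc (α := fun j => Fin (μ j + 1)) γ a) =
      insertionWeight (Fin.init μ) γ *
        ((∑ j, (Fin.init μ j - (γ j : ℕ)) + (μ (Fin.last p) - a)).choose (μ (Fin.last p) - a) *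
          (∑ j, (Fin.init μ j - (γ j : ℕ)) + μ (Fin.last p) - 1).choose a) := by
  have hIic : Iic (Fin.last p) = univ := by rw [← Fin.top_eq_last, Iic_top]
  simp only [insertionWeight, Fin.prod_univ_castSucc, filter_ge_eq_Iic, filter_gt_eq_Iio,
    Fin.sum_Iic_castSucc, Fin.sum_Iio_castSucc, Fin.Iio_last_eq_map, sum_map,
    Fin.coe_castSuccEmb, hIic, Fin.sum_univ_castSucc, val_snoc_castSucc, val_snoc_last]
  rfl

theorem choose_mul_ite_choose_eq_sum (k s m : ℕ) :
    k.choose s * (if k - s ≤ m then (k + (m - (k - s)) - 1).choose (m - (k - s)) else 0) =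
      ∑ a : Fin (m + 1),
        if s + (m - a) = k then (s + (m - a)).choose (m - a) * (s + m - 1).choose a else 0 := by
  by_cases h : s ≤ k ∧ k - s ≤ m
  · rw [if_pos h.2, sum_eq_single ⟨m - (k - s), by omega⟩ (fun a _ ha => if_neg fun h' =>
      ha (Fin.ext (by simp only; omega))) (by simp), if_pos (by simp only; omega)]
    simp only
    rw [show m - (m - (k - s)) = k - s by omega, show s + (k - s) = k by omega,
      show k + (m - (k - s)) - 1 = s + m - 1 by omega, Nat.choose_symm h.1]
  · rw [sum_eq_zero fun a _ => if_neg (by omega)]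
    rcases not_and_or.1 h with h | h
    · rw [Nat.choose_eq_zero_of_lt (by omega), zero_mul]
    · rw [if_neg h, mul_zero]

theorem sum_sub_snoc (μ : Fin (p + 1) → ℕ) (γ : (j : Fin p) → Fin (Fin.init μ j + 1))
    (a : Fin (μ (Fin.last p) + 1)) :
    ∑ j, (μ j - (Fin.snoc (α := fun j => Fin (μ j + 1)) γ a j : ℕ)) =
      ∑ j, (Fin.init μ j - (γ j : ℕ)) + (μ (Fin.last p) - a) := by
  simp only [Fin.sum_univ_castSucc, val_snoc_castSucc, val_snoc_last]
  rfl

theorem sum_ite_card_eq_choose_smul {ι M : Type*} [Fintype ι] [AddCommMonoid M] (s : ℕ)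
    (c : M) :
    ∑ A : Finset ι, (if #A = s then c else 0) = (Fintype.card ι).choose s • c := by
  classical
  rw [← sum_filter, ← powerset_univ, ← powersetCard_eq_filter, sum_const, card_powersetCard,
    card_univ]

theorem sum_tuple_eq_sum_sum_snoc {M : Type*} [AddCommMonoid M] (μ : Fin (p + 1) → ℕ)
    (G : ((j : Fin (p + 1)) → Fin (μ j + 1)) → M) :
    ∑ γ, G γ = ∑ a : Fin (μ (Fin.last p) + 1), ∑ γ : (j : Fin p) → Fin (Fin.init μ j + 1),
      G (Fin.snoc (α := fun j => Fin (μ j + 1)) γ a) := by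
  rw [← (Fin.snocEquiv fun j => Fin (μ j + 1)).sum_comp, Fintype.sum_prod_type]
  rfl

theorem card_coveringMatrices (μ : Fin p → ℕ) (ι : Type*) [Fintype ι] [DecidableEq ι] :
    Nat.card (coveringMatrices μ ι) = ∑ γ : (j : Fin p) → Fin (μ j + 1),
      if ∑ j, (μ j - (γ j : ℕ)) = Fintype.card ι then insertionWeight μ γ else 0 := by
  induction p generalizing ι with
  | zero =>
    simp only [insertionWeight, univ_eq_empty, prod_empty, sum_empty, univ_unique, sum_singleton]
    rcases isEmpty_or_nonempty ι with hι | hι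
    · have : coveringMatrices μ ι = Set.univ :=
        Set.eq_univ_of_forall fun M => ⟨finZeroElim, isEmptyElim⟩
      simp [this]
    · have : coveringMatrices μ ι = ∅ :=
        Set.eq_empty_of_forall_notMem fun M hM => (hM.2 hι.some).elim fun j _ => j.elim0
      simpa [this] using Fintype.card_ne_zero.symm
  | succ p ih =>
    set k := Fintype.card ι
    set m := μ (Fin.last p)
    calc Nat.card (coveringMatrices μ ι)
        = ∑ A : Finset ι, ∑ γ : (j : Fin p) → Fin (Fin.init μ j + 1),
            if ∑ j, (Fin.init μ j - (γ j : ℕ)) = #A then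
              insertionWeight (Fin.init μ) γ *
                (if k - #A ≤ m then (k + (m - (k - #A)) - 1).choose (m - (k - #A)) else 0)
            else 0 := by
          simp only [card_coveringMatrices_succ, ih, card_sum_eq_of_ne_zero_on, Fintype.card_coe,
            card_compl, sum_mul, ite_mul, zero_mul, k, m]
      _ = ∑ γ : (j : Fin p) → Fin (Fin.init μ j + 1), ∑ a : Fin (m + 1),
            if ∑ j, (Fin.init μ j - (γ j : ℕ)) + (m - a) = k then
              insertionWeight (Fin.init μ) γ *
                ((∑ j, (Fin.init μ j - (γ j : ℕ)) + (m - a)).choose (m - a) *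
                  (∑ j, (Fin.init μ j - (γ j : ℕ)) + m - 1).choose a)
            else 0 := by
          rw [sum_comm]
          refine sum_congr rfl fun γ _ => ?_
          set s := ∑ j, (Fin.init μ j - (γ j : ℕ))
          calc _ = ∑ A : Finset ι, if #A = s then insertionWeight (Fin.init μ) γ *
                  (if k - s ≤ m then (k + (m - (k - s)) - 1).choose (m - (k - s)) else 0)
                else 0 := sum_congr rfl fun A _ => by
                  by_cases h : #A = s <;> simp [h, eq_comm (a := s)]
            _ = _ := by
                  rw [sum_ite_card_eq_choose_smul, smul_eq_mul, mul_left_comm,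
                    choose_mul_ite_choose_eq_sum, mul_sum]
                  simp only [mul_ite, mul_zero, k]
      _ = _ := by
          rw [sum_tuple_eq_sum_sum_snoc μ, sum_comm]
          simp only [sum_sub_snoc, insertionWeight_snoc, k, m]

theorem card_batch_increasing_ordered_set_partitions_general
    (n p : ℕ) (μ : Fin p → ℕ)
    (hsum : ∑ j, μ j = n) :
    Nat.card {L : List (Finset (Fin n)) //
      (∀ B ∈ L, B.Nonempty) ∧ L.Pairwise Disjoint ∧
      (∀ x : Fin n, ∃ B ∈ L, x ∈ B) ∧
      (∀ a b : Fin n, batchOf p μ (a : ℕ) = batchOf p μ (b : ℕ) → (a : ℕ) < (b : ℕ) →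
        L.findIdx (fun B => decide (a ∈ B)) ≤ L.findIdx (fun B => decide (b ∈ B)))}
    = ∑ γ : (j : Fin p) → Fin (μ j + 1),
        ∏ j : Fin p,
          Nat.choose (∑ l ∈ Finset.univ.filter (fun l : Fin p => l ≤ j), (μ l - (γ l : ℕ)))
              (μ j - (γ j : ℕ)) *
            Nat.choose
              ((∑ l ∈ Finset.univ.filter (fun l : Fin p => l < j), (μ l - (γ l : ℕ)))
                + μ j - 1)
              (γ j : ℕ) := by
  calc _ = ∑ k ∈ range (n + 1), Nat.card {f : Fin n → Fin k // Function.Surjective f ∧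
          ∀ a b : Fin n, batchOf p μ a = batchOf p μ b → (a : ℕ) < b → (f a : ℕ) ≤ f b} := by
        refine (card_orderedPartitions_eq_sum_card_surjective fun f : Fin n → ℕ =>
          ∀ a b : Fin n, batchOf p μ a = batchOf p μ b → (a : ℕ) < b → f a ≤ f b).trans ?_
        rw [Fintype.card_fin]
    _ = ∑ k ∈ range (n + 1), ∑ γ : (j : Fin p) → Fin (μ j + 1),
          if ∑ j, (μ j - (γ j : ℕ)) = k then insertionWeight μ γ else 0 := by
        refine sum_congr rfl fun k _ => ?_
        rw [card_batchMonotone_surjective_eq_card_coveringMatrices μ hsum, card_coveringMatrices,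
          Fintype.card_fin]
    _ = ∑ γ : (j : Fin p) → Fin (μ j + 1), insertionWeight μ γ := by
        rw [sum_comm]
        refine sum_congr rfl fun γ _ => ?_
        rw [sum_ite_eq, if_pos (mem_range_succ_iff.2 (hsum ▸ sum_le_sum fun j _ => Nat.sub_le _ _))]

/-- For a partition `μ = (μ_1,…,μ_p)` of `n`, the number of ordered set
partitions of `[n]` in which the entries of each batch appear in increasing
order from left to right equals
`∑_{0 ≤ γ ≤ μ} ∏_j C((μ_1-γ_1)+⋯+(μ_j-γ_j), μ_j-γ_j) ·
 C((μ_1-γ_1)+⋯+(μ_{j-1}-γ_{j-1})+μ_j-1, γ_j)`. -/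
theorem card_batch_increasing_ordered_set_partitions
    (n p : ℕ) (μ : Fin p → ℕ)
    (hpos : ∀ j, 0 < μ j) (hmono : Antitone μ) (hsum : ∑ j, μ j = n) :
    Nat.card {L : List (Finset (Fin n)) //
      (∀ B ∈ L, B.Nonempty) ∧ L.Pairwise Disjoint ∧
      (∀ x : Fin n, ∃ B ∈ L, x ∈ B) ∧
      (∀ a b : Fin n, batchOf p μ (a : ℕ) = batchOf p μ (b : ℕ) → (a : ℕ) < (b : ℕ) →
        L.findIdx (fun B => decide (a ∈ B)) ≤ L.findIdx (fun B => decide (b ∈ B)))}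
    = ∑ γ : (j : Fin p) → Fin (μ j + 1),
        ∏ j : Fin p,
          Nat.choose (∑ l ∈ Finset.univ.filter (fun l : Fin p => l ≤ j), (μ l - (γ l : ℕ)))
              (μ j - (γ j : ℕ)) *
            Nat.choose
              ((∑ l ∈ Finset.univ.filter (fun l : Fin p => l < j), (μ l - (γ l : ℕ)))
                + μ j - 1)
              (γ j : ℕ) :=
  card_batch_increasing_ordered_set_partitions_general n p μ hsum
end

section
/- For m, k, t ≥ 0 with k ≤ m, the set of polynomials {e_λ(x_1,...,x_m)·s_ν(x_{m-k+1},...,x_m) : λ a partition with parts ≤ m and at most χ parts, ν a partition fitting inside the k×(m-k) rectangle}, where χ = t if ν_1 < m-k and χ = t-1 if ν_1 = m-k, is linearly independent in F[x_1,...,x_m] over a field F of characteristic 0. -/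
attribute [local instance] Classical.propDecidable

/-- Semistandard fillings of the Young diagram `ν` with entries in
`{0,…,k-1}`, encoded as functions on the cells of `ν`. -/
noncomputable def ssytFuns (ν : YoungDiagram) (k : ℕ) : Finset (↥ν.cells → Fin k) :=
  Finset.univ.filter fun T =>
    (∀ a b : ↥ν.cells, (a : ℕ × ℕ).1 = (b : ℕ × ℕ).1 → (a : ℕ × ℕ).2 ≤ (b : ℕ × ℕ).2 →
        T a ≤ T b) ∧
    (∀ a b : ↥ν.cells, (a : ℕ × ℕ).2 = (b : ℕ × ℕ).2 → (a : ℕ × ℕ).1 < (b : ℕ × ℕ).1 →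
        T a < T b)

/-- The Schur polynomial `s_ν` in the `k` variables `x_{v(0)},…,x_{v(k-1)}`. -/
noncomputable def schurPoly (F : Type*) [Field F] (m : ℕ) (ν : YoungDiagram)
    (k : ℕ) (v : Fin k → Fin m) : MvPolynomial (Fin m) F :=
  ∑ T ∈ ssytFuns ν k, ∏ a : ↥ν.cells, MvPolynomial.X (v (T a))

/-!
The `e_λ` with parts at most `m` are the monomials in `e_1, …, e_m`, which are algebraically
independent; so they are linearly independent over `F` inside the ring `S` of symmetric
polynomials, and it suffices that the `s_ν(x_{m-k+1}, …, x_m)`, `ν` in the `k × (m-k)` box, are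
linearly independent over `S`.

This is proved by induction on the box, for a block of variables `x_a, …, x_{a+n+k-1}` and
Schur polynomials in its last `k` variables. Take a relation `∑ f_ν s_ν = 0` with symmetric `f_ν`.
Setting the last variable to `0` kills `s_ν` for `ν` with `k` rows and gives a relation in a
`(k-1) × n` box, so `f_ν` vanishes at `x_{a+n+k-1} = 0` whenever `ν` has fewer than `k` rows, and
by symmetry also at `x_a = 0`. For `ν` with `k` rows, `s_ν = x_{a+n} ⋯ x_{a+n+k-1} · s_{ν'}`,
where `ν'` is `ν` without its first column; so setting `x_a = 0` and cancelling this product gives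
a relation in a `k × (n-1)` box. Hence every `f_ν` vanishes when some variable of the block is
`0`, so by symmetry it is divisible by the product of all of them; the quotients satisfy the same
relation, and a nonzero polynomial has only finitely many such factors.
-/

open MvPolynomial Finset

namespace MvPolynomial

section KillVar

variable {σ R : Type*} [CommRing R] [DecidableEq σ]

noncomputable def killVar (j : σ) : MvPolynomial σ R →ₐ[R] MvPolynomial σ R :=
  aeval (Function.update X j 0)

lemma killVar_X (j l : σ) : killVar j (X l : MvPolynomial σ R) = if l = j then 0 else X l := by
  by_cases h : l = j
  · subst h
    simp [killVar]
  · simp [killVar, h]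

lemma killVar_prod_X {ι : Type*} (j : σ) (s : Finset ι) (g : ι → σ) :
    killVar j (∏ x ∈ s, (X (g x) : MvPolynomial σ R)) =
      if ∀ x ∈ s, g x ≠ j then ∏ x ∈ s, X (g x) else 0 := by
  rw [map_prod]
  by_cases h : ∀ x ∈ s, g x ≠ j
  · exact (if_pos h).symm ▸ prod_congr rfl fun x hx => by rw [killVar_X, if_neg (h x hx)]
  · obtain ⟨x, hx, hxj⟩ : ∃ x ∈ s, g x = j := by simpa using h
    rw [if_neg h]
    exact prod_eq_zero hx (by rw [killVar_X, if_pos hxj])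

lemma killVar_monomial (j : σ) (u : σ →₀ ℕ) (c : R) :
    killVar j (monomial u c) = if u j = 0 then monomial u c else 0 := by
  rw [killVar, aeval_monomial, monomial_eq, algebraMap_eq, Finsupp.prod, Finsupp.prod]
  split_ifs with h
  · congr 1
    refine prod_congr rfl fun l hl => ?_
    rw [Function.update_of_ne (by rintro rfl; exact Finsupp.mem_support_iff.mp hl h)]
  · rw [prod_eq_zero (Finsupp.mem_support_iff.mpr h) (by simp [zero_pow h]), mul_zero]

lemma coeff_killVar_of_eq_zero {j : σ} {u : σ →₀ ℕ} (hu : u j = 0) (f : MvPolynomial σ R) :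
    coeff u (killVar j f) = coeff u f := by
  induction f using MvPolynomial.induction_on' with
  | monomial v c =>
    rw [killVar_monomial]
    split_ifs with hv
    · rfl
    · rw [coeff_zero, coeff_monomial, if_neg (by rintro rfl; exact hv hu)]
  | add p q hp hq => rw [map_add, coeff_add, coeff_add, hp, hq]

lemma X_dvd_of_killVar_eq_zero {j : σ} {f : MvPolynomial σ R} (h : killVar j f = 0) :
    X j ∣ f := by
  rw [X_dvd_iff_modMonomial_eq_zero]
  ext u
  by_cases hu : Finsupp.single j 1 ≤ u
  · rw [coeff_modMonomial_of_le _ hu, coeff_zero]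
  · have huj : u j = 0 := by
      rw [Finsupp.single_le_iff] at hu
      omega
    rw [coeff_modMonomial_of_not_le _ hu, coeff_zero, ← coeff_killVar_of_eq_zero huj, h,
      coeff_zero]

lemma killVar_rename (e : σ ≃ σ) (j : σ) (f : MvPolynomial σ R) :
    killVar (e j) (rename e f) = rename e (killVar j f) := by
  rw [← AlgHom.comp_apply, ← AlgHom.comp_apply (rename e)]
  congr 1
  refine algHom_ext fun l => ?_
  simp only [AlgHom.comp_apply, rename_X, killVar_X, e.injective.eq_iff]
  split_ifs <;> simp

def IsSymmetricOn (s : Set σ) (f : MvPolynomial σ R) : Prop :=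
  ∀ i ∈ s, ∀ j ∈ s, rename (Equiv.swap i j) f = f

namespace IsSymmetricOn

variable {s t : Set σ} {f : MvPolynomial σ R}

lemma mono (hf : IsSymmetricOn s f) (hts : t ⊆ s) : IsSymmetricOn t f :=
  fun i hi j hj => hf i (hts hi) j (hts hj)

lemma killVar (hf : IsSymmetricOn s f) (j : σ) : IsSymmetricOn (s \ {j}) (killVar j f) := by
  intro i hi l hl
  have hj : Equiv.swap i l j = j := Equiv.swap_apply_of_ne_of_ne
    (fun h => hi.2 (h ▸ rfl)) (fun h => hl.2 (h ▸ rfl))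
  rw [← killVar_rename, hj, hf i hi.1 l hl.1]

lemma killVar_eq_zero (hf : IsSymmetricOn s f) {i j : σ} (hi : i ∈ s) (hj : j ∈ s)
    (h : MvPolynomial.killVar j f = 0) : MvPolynomial.killVar i f = 0 :=
  calc MvPolynomial.killVar i f
      = MvPolynomial.killVar (Equiv.swap j i j) (rename (Equiv.swap j i) f) := by
        rw [Equiv.swap_apply_left, hf j hj i hi]
    _ = 0 := by rw [killVar_rename, h, map_zero]

lemma of_mul_left [IsDomain R] {p : MvPolynomial σ R} (hp : IsSymmetricOn s p) (hp0 : p ≠ 0)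
    (h : IsSymmetricOn s (p * f)) : IsSymmetricOn s f := fun i hi j hj =>
  mul_left_cancel₀ hp0 (by rw [← hp i hi j hj, ← map_mul, h i hi j hj, hp i hi j hj])

end IsSymmetricOn

lemma isSymmetricOn_prod_X (s : Finset σ) :
    IsSymmetricOn (s : Set σ) (∏ i ∈ s, (X i : MvPolynomial σ R)) := by
  intro i hi j hj
  simp only [map_prod, rename_X]
  refine Equiv.Perm.prod_comp _ _ (fun l => X l) fun l hl => ?_
  by_contra hls
  exact hl (Equiv.swap_apply_of_ne_of_ne (fun h => hls (h ▸ hi)) fun h => hls (h ▸ hj))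

lemma IsSymmetric.isSymmetricOn_rename {τ : Type*} {g : MvPolynomial τ R} (hg : g.IsSymmetric)
    {e : τ → σ} (he : Function.Injective e) : IsSymmetricOn (Set.range e) (rename e g) := by
  rintro _ ⟨i, rfl⟩ _ ⟨j, rfl⟩
  have hswap : ⇑(Equiv.swap (e i) (e j)) ∘ e = e ∘ Equiv.swap i j := by
    ext l
    exact he.swap_apply i j l
  rw [rename_rename, hswap, ← rename_rename, hg]

lemma prod_X_dvd_of_killVar_eq_zero {K : Type*} [Field K] {s : Finset σ}
    {f : MvPolynomial σ K} (hf : IsSymmetricOn (s : Set σ) f) {j : σ} (hj : j ∈ s)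
    (h : killVar j f = 0) : ∏ i ∈ s, X i ∣ f :=
  Finset.prod_dvd_of_isRelPrime
    (fun i _ l _ hil => X_prime.irreducible.isRelPrime_iff_not_dvd.mpr (by rwa [X_dvd_X]))
    fun i hi => X_dvd_of_killVar_eq_zero (hf.killVar_eq_zero hi hj h)

end KillVar

section Esymm

lemma prod_map_X_eq_monomial {σ R : Type*} [CommSemiring R] [DecidableEq σ] (μ : Multiset σ) :
    (μ.map X).prod = (monomial (Multiset.toFinsupp μ) 1 : MvPolynomial σ R) := by
  induction μ using Multiset.induction_on with
  | empty => simp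
  | cons a μ ih =>
    rw [Multiset.map_cons, Multiset.prod_cons, ih, ← Multiset.singleton_add,
      Multiset.toFinsupp_add, Multiset.toFinsupp_singleton, X, monomial_mul, mul_one]

variable (σ R : Type*) [Fintype σ] [CommRing R]

lemma linearIndependent_esymmAlgHom_prod_X {n : ℕ} (hn : n ≤ Fintype.card σ) :
    LinearIndependent R fun μ : Multiset (Fin n) => esymmAlgHom σ R n (μ.map X).prod := by
  have hmon : LinearIndependent R fun μ : Multiset (Fin n) =>
      ((μ.map X).prod : MvPolynomial (Fin n) R) := by
    simpa only [prod_map_X_eq_monomial, Function.comp_def, coe_basisMonomials] using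
      (basisMonomials (Fin n) R).linearIndependent.comp _ Multiset.toFinsupp.injective
  exact hmon.map' (esymmAlgHom σ R n).toLinearMap
    (LinearMap.ker_eq_bot.mpr (esymmAlgHom_injective R hn))

lemma coe_esymmAlgHom_prod_map_X {n : ℕ} (μ : Multiset (Fin n)) :
    (esymmAlgHom σ R n (μ.map X).prod : MvPolynomial σ R) =
      ((μ.map fun i : Fin n => (i : ℕ) + 1).map (esymm σ R)).prod := by
  rw [esymmAlgHom_apply, map_multiset_prod, Multiset.map_map, Multiset.map_map]
  simp [Function.comp_def]

end Esymm

end MvPolynomial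

lemma Multiset.map_succ_pmap_pred {m : ℕ} (s : Multiset ℕ) (hs : ∀ a ∈ s, 0 < a ∧ a ≤ m) :
    (s.pmap (fun d hd => (⟨d - 1, by omega⟩ : Fin m)) hs).map (fun i : Fin m => (i : ℕ) + 1) =
      s := by
  rw [Multiset.map_pmap, Multiset.pmap_congr (g := fun d (_ : 0 < d ∧ d ≤ m) => d) s (H₂ := hs)
    fun d hd _ _ => Nat.sub_add_cancel (hs d hd).1, Multiset.pmap_eq_map, Multiset.map_id']

lemma eq_zero_of_forall_dvd_of_quotient {R ι : Type*} [CommMonoidWithZero R] [IsCancelMulZero R]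
    [WfDvdMonoid R] {p : R} (hp : ¬IsUnit p) {A : Finset ι} {S : (ι → R) → Prop}
    (hdvd : ∀ f, S f → ∀ i ∈ A, p ∣ f i)
    (hquot : ∀ f g, S f → (∀ i ∈ A, f i = p * g i) → S g) {f : ι → R} (hf : S f) :
    ∀ i ∈ A, f i = 0 := by
  have hpow : ∀ N f, S f → ∀ i ∈ A, p ^ N ∣ f i := by
    intro N
    induction N with
    | zero => simp
    | succ N ih =>
      intro f hf
      choose! g hg using hdvd f hf
      intro i hi
      rw [hg i hi, pow_succ']
      exact mul_dvd_mul_left p (ih g (hquot f g hf hg) i hi)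
  intro i hi
  by_contra hfi
  obtain ⟨N, hN⟩ := FiniteMultiplicity.of_not_isUnit hp hfi
  exact hN (hpow (N + 1) f hf i hi)

namespace YoungDiagram

variable {ν : YoungDiagram}

lemma eq_bot_of_zero_notMem (h : ((0, 0) : ℕ × ℕ) ∉ ν) : ν = ⊥ := by
  ext ⟨i, j⟩
  simp only [mem_cells, cells_bot, Finset.notMem_empty, iff_false]
  exact fun hij => h (ν.up_left_mem (Nat.zero_le i) (Nat.zero_le j) hij)

noncomputable def dropFirstColumn (ν : YoungDiagram) : YoungDiagram where
  cells := ν.cells.preimage (fun c => (c.1, c.2 + 1))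
    (Function.Injective.injOn fun a b h => by simpa [Prod.ext_iff] using h)
  isLowerSet a b hab hb := by
    simp only [coe_preimage, Set.mem_preimage, mem_coe, mem_cells] at hb ⊢
    exact ν.up_left_mem hab.1 (Nat.add_le_add_right hab.2 1) hb

@[simp]
lemma mem_dropFirstColumn {i j : ℕ} : (i, j) ∈ ν.dropFirstColumn ↔ (i, j + 1) ∈ ν := by
  rw [← mem_cells, dropFirstColumn, mem_preimage, mem_cells]

lemma rowLen_dropFirstColumn (i : ℕ) : ν.dropFirstColumn.rowLen i = ν.rowLen i - 1 :=
  eq_of_forall_lt_iff fun j => by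
    rw [← mem_iff_lt_rowLen, mem_dropFirstColumn, mem_iff_lt_rowLen]
    omega

lemma colLen_dropFirstColumn (j : ℕ) : ν.dropFirstColumn.colLen j = ν.colLen (j + 1) :=
  eq_of_forall_lt_iff fun i => by
    rw [← mem_iff_lt_colLen, mem_dropFirstColumn, mem_iff_lt_colLen]

lemma eq_of_dropFirstColumn_eq {ν' : YoungDiagram} (hcol : ν.colLen 0 = ν'.colLen 0)
    (h : ν.dropFirstColumn = ν'.dropFirstColumn) : ν = ν' := by
  ext ⟨i, j⟩
  rw [mem_cells, mem_cells]
  cases j with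
  | zero => rw [mem_iff_lt_colLen, mem_iff_lt_colLen, hcol]
  | succ j => rw [← mem_dropFirstColumn, ← mem_dropFirstColumn, h]

def cellsEquiv (ν : YoungDiagram) : ν.cells ≃ Fin (ν.colLen 0) ⊕ ν.dropFirstColumn.cells where
  toFun x :=
    if h : (x : ℕ × ℕ).2 = 0 then
      .inl ⟨(x : ℕ × ℕ).1, mem_iff_lt_colLen.mp (by simp [← h])⟩
    else
      .inr ⟨((x : ℕ × ℕ).1, (x : ℕ × ℕ).2 - 1), by
        rw [mem_cells, mem_dropFirstColumn, Nat.sub_add_cancel (Nat.pos_of_ne_zero h)]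
        exact (mem_cells _).mp x.2⟩
  invFun := Sum.elim (fun i => ⟨((i : ℕ), 0), (mem_cells _).mpr (mem_iff_lt_colLen.mpr i.2)⟩)
    fun y => ⟨((y : ℕ × ℕ).1, (y : ℕ × ℕ).2 + 1), (mem_cells _).mpr
      (mem_dropFirstColumn.mp ((mem_cells _).mp y.2))⟩
  left_inv := by
    rintro ⟨⟨i, j⟩, hx⟩
    by_cases h : j = 0
    · subst h
      simp
    · simp only [h, ↓reduceDIte, Sum.elim_inr, Subtype.mk.injEq, Prod.mk.injEq, true_and]
      omega
  right_inv := by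
    rintro (i | ⟨⟨i, j⟩, hy⟩) <;> simp

@[simp]
lemma coe_cellsEquiv_symm_inl (i : Fin (ν.colLen 0)) :
    (ν.cellsEquiv.symm (.inl i) : ℕ × ℕ) = ((i : ℕ), 0) := rfl

@[simp]
lemma coe_cellsEquiv_symm_inr (y : ν.dropFirstColumn.cells) :
    (ν.cellsEquiv.symm (.inr y) : ℕ × ℕ) = ((y : ℕ × ℕ).1, (y : ℕ × ℕ).2 + 1) := rfl

end YoungDiagram

section Tableaux

variable {ν : YoungDiagram} {k : ℕ} {T : ν.cells → Fin k}

lemma mem_ssytFuns :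
    T ∈ ssytFuns ν k ↔
      (∀ a b : ν.cells, (a : ℕ × ℕ).1 = (b : ℕ × ℕ).1 → (a : ℕ × ℕ).2 ≤ (b : ℕ × ℕ).2 →
        T a ≤ T b) ∧
      (∀ a b : ν.cells, (a : ℕ × ℕ).2 = (b : ℕ × ℕ).2 → (a : ℕ × ℕ).1 < (b : ℕ × ℕ).1 →
        T a < T b) := by
  simp [ssytFuns]

lemma comp_mem_ssytFuns_iff {l : ℕ} (e : Fin k ↪o Fin l) :
    e ∘ T ∈ ssytFuns ν l ↔ T ∈ ssytFuns ν k := by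
  simp [mem_ssytFuns]

lemma row_le_of_mem_ssytFuns (hT : T ∈ ssytFuns ν k) (x : ν.cells) : (x : ℕ × ℕ).1 ≤ T x := by
  obtain ⟨⟨i, j⟩, hx⟩ := x
  induction i with
  | zero => exact Nat.zero_le _
  | succ i ih =>
    have hup : (i, j) ∈ ν.cells := (YoungDiagram.mem_cells _).mpr
      (ν.up_left_mem i.le_succ le_rfl ((YoungDiagram.mem_cells _).mp hx))
    have hlt := (mem_ssytFuns.mp hT).2 ⟨_, hup⟩ ⟨_, hx⟩ rfl (Nat.lt_succ_self i)
    have := ih hup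
    simp only at this ⊢
    rw [Fin.lt_def] at hlt
    omega

lemma ssytFuns_eq_empty (h : k < ν.colLen 0) : ssytFuns ν k = ∅ := by
  refine eq_empty_of_forall_notMem fun T hT => ?_
  have hx : (k, 0) ∈ ν.cells :=
    (YoungDiagram.mem_cells _).mpr (YoungDiagram.mem_iff_lt_colLen.mpr h)
  exact absurd (row_le_of_mem_ssytFuns hT ⟨_, hx⟩) (by simp)

lemma firstColumn_eq_of_mem_ssytFuns {T : ν.cells → Fin (ν.colLen 0)}
    (hT : T ∈ ssytFuns ν (ν.colLen 0)) (i : Fin (ν.colLen 0)) :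
    T (ν.cellsEquiv.symm (.inl i)) = i := by
  have hmono : StrictMono fun i => T (ν.cellsEquiv.symm (.inl i)) :=
    fun i i' h => (mem_ssytFuns.mp hT).2 _ _ rfl h
  exact congrFun hmono.eq_id i

lemma comp_cellsEquiv_symm_inr_mem_ssytFuns (hT : T ∈ ssytFuns ν k) :
    T ∘ ν.cellsEquiv.symm ∘ .inr ∈ ssytFuns ν.dropFirstColumn k := by
  obtain ⟨hrow, hcol⟩ := mem_ssytFuns.mp hT
  refine mem_ssytFuns.mpr ⟨fun a b h1 h2 => hrow _ _ ?_ ?_, fun a b h1 h2 => hcol _ _ ?_ ?_⟩ <;>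
    simpa using ‹_›

lemma elim_comp_cellsEquiv_mem_ssytFuns {U : ν.dropFirstColumn.cells → Fin (ν.colLen 0)}
    (hU : U ∈ ssytFuns ν.dropFirstColumn (ν.colLen 0)) :
    Sum.elim id U ∘ ν.cellsEquiv ∈ ssytFuns ν (ν.colLen 0) := by
  obtain ⟨hrow, hcol⟩ := mem_ssytFuns.mp hU
  rw [mem_ssytFuns, ν.cellsEquiv.symm.surjective.forall₂, ν.cellsEquiv.symm.surjective.forall₂]
  simp only [Function.comp_apply, Equiv.apply_symm_apply]
  constructor
  · rintro (i | y) (i' | y') h1 h2 <;> simp only [YoungDiagram.coe_cellsEquiv_symm_inl,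
      YoungDiagram.coe_cellsEquiv_symm_inr, Sum.elim_inl, Sum.elim_inr, id] at h1 h2 ⊢
    · exact (Fin.ext h1).le
    · have := row_le_of_mem_ssytFuns hU y'
      rw [Fin.le_def]
      omega
    · omega
    · exact hrow y y' h1 (by omega)
  · rintro (i | y) (i' | y') h1 h2 <;> simp only [YoungDiagram.coe_cellsEquiv_symm_inl,
      YoungDiagram.coe_cellsEquiv_symm_inr, Sum.elim_inl, Sum.elim_inr, id] at h1 h2 ⊢
    · exact h2
    · omega
    · omega
    · exact hcol y y' (by omega) h2

end Tableaux

section Schur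

variable (R : Type*) [CommRing R]

noncomputable def schurFrom (c k : ℕ) (ν : YoungDiagram) : MvPolynomial ℕ R :=
  ∑ T ∈ ssytFuns ν k, ∏ x, X (c + T x)

variable {R} {c k : ℕ} {ν : YoungDiagram}

lemma schurFrom_eq_zero_of_lt_colLen (h : k < ν.colLen 0) : schurFrom R c k ν = 0 := by
  rw [schurFrom, ssytFuns_eq_empty h, sum_empty]

lemma schurFrom_bot : schurFrom R c k ⊥ = 1 := by
  simp [schurFrom, ssytFuns]

lemma killVar_schurFrom_of_lt {j : ℕ} (hj : j < c) :
    killVar j (schurFrom R c k ν) = schurFrom R c k ν := by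
  rw [schurFrom, map_sum]
  exact sum_congr rfl fun T _ => by rw [killVar_prod_X, if_pos fun x _ => by omega]

lemma killVar_schurFrom_succ :
    killVar (c + k) (schurFrom R c (k + 1) ν) = schurFrom R c k ν := by
  rw [schurFrom, schurFrom, map_sum]
  symm
  refine sum_of_injOn (Fin.castSucc ∘ ·)
    (fun U _ V _ h => funext fun x => Fin.castSucc_injective _ (congrFun h x))
    (fun U hU => (comp_mem_ssytFuns_iff Fin.castSuccOrderEmb).mpr hU) (fun T hT hT' => ?_)
    fun U _ => ?_
  · rw [killVar_prod_X, if_neg]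
    intro hne
    have hlast : ∀ x, T x ≠ Fin.last k := fun x h => hne x (mem_univ _) (by simp [h])
    refine hT' ⟨fun x => (T x).castPred (hlast x), ?_, funext fun x => by simp⟩
    rw [mem_coe, ← comp_mem_ssytFuns_iff Fin.castSuccOrderEmb]
    convert hT
    funext x
    simp
  · rw [killVar_prod_X, if_pos fun x _ => by simp; omega]
    rfl

lemma schurFrom_eq_prod_mul_of_colLen_eq (h : ν.colLen 0 = k) :
    schurFrom R c k ν = (∏ i ∈ range k, X (c + i)) * schurFrom R c k ν.dropFirstColumn := by
  subst h
  rw [← Fin.prod_univ_eq_prod_range (fun i => (X (c + i) : MvPolynomial ℕ R)), schurFrom,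
    schurFrom, mul_sum]
  refine sum_nbij' (fun T => T ∘ ν.cellsEquiv.symm ∘ .inr) (fun U => Sum.elim id U ∘ ν.cellsEquiv)
    (fun T hT => comp_cellsEquiv_symm_inr_mem_ssytFuns hT)
    (fun U hU => elim_comp_cellsEquiv_mem_ssytFuns hU) (fun T hT => ?_) (fun U _ => ?_)
    (fun T hT => ?_)
  · funext x
    obtain ⟨s | y, rfl⟩ := ν.cellsEquiv.symm.surjective x
    · simp [firstColumn_eq_of_mem_ssytFuns hT]
    · simp
  · funext y
    simp
  · rw [← ν.cellsEquiv.symm.prod_comp, Fintype.prod_sum_type]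
    simp [firstColumn_eq_of_mem_ssytFuns hT]

end Schur

section Independence

variable (F : Type*) [Field F]

/-- The Schur polynomials in `x_{a+n}, …, x_{a+n+k-1}` of distinct diagrams in the `k × n` box
are linearly independent over the polynomials symmetric in `x_a, …, x_{a+n+k-1}`. -/
def SchurCoeffsVanish (n k : ℕ) : Prop :=
  ∀ (a : ℕ) {ι : Type} (A : Finset ι) (ν : ι → YoungDiagram) (f : ι → MvPolynomial ℕ F),
    Set.InjOn ν A → (∀ i ∈ A, (ν i).rowLen 0 ≤ n) → (∀ i ∈ A, (ν i).colLen 0 ≤ k) →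
    (∀ i ∈ A, IsSymmetricOn (Set.Ico a (a + n + k)) (f i)) →
    ∑ i ∈ A, f i * schurFrom F (a + n) k (ν i) = 0 → ∀ i ∈ A, f i = 0

variable {F}

lemma schurCoeffsVanish_of_eq_zero {n k : ℕ} (h : n = 0 ∨ k = 0) : SchurCoeffsVanish F n k := by
  intro a ι A ν f hinj hrow hcol _ hsum i hi
  have hbot : ∀ j ∈ A, ν j = ⊥ := by
    intro j hj
    refine YoungDiagram.eq_bot_of_zero_notMem ?_
    rcases h with rfl | rfl
    · rw [YoungDiagram.mem_iff_lt_rowLen]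
      exact (hrow j hj).not_gt
    · rw [YoungDiagram.mem_iff_lt_colLen]
      exact (hcol j hj).not_gt
  rwa [sum_eq_single_of_mem i hi fun j hj hji =>
      absurd (hinj hj hi ((hbot j hj).trans (hbot i hi).symm)) hji,
    hbot i hi, schurFrom_bot, mul_one] at hsum

variable {n k a : ℕ} {ι : Type} {A : Finset ι} {ν : ι → YoungDiagram} {f : ι → MvPolynomial ℕ F}

lemma SchurCoeffsVanish.killVar_last_eq_zero (hv : SchurCoeffsVanish F (n + 1) k)
    (hinj : Set.InjOn ν A) (hrow : ∀ i ∈ A, (ν i).rowLen 0 ≤ n + 1)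
    (hsym : ∀ i ∈ A, IsSymmetricOn (Set.Ico a (a + (n + 1) + (k + 1))) (f i))
    (hsum : ∑ i ∈ A, f i * schurFrom F (a + (n + 1)) (k + 1) (ν i) = 0) :
    ∀ i ∈ A, (ν i).colLen 0 ≤ k → killVar (a + (n + 1) + k) (f i) = 0 := by
  have hkill := congrArg (killVar (a + (n + 1) + k)) hsum
  simp only [map_sum, map_mul, killVar_schurFrom_succ, map_zero] at hkill
  have hshort : ∑ i ∈ A with (ν i).colLen 0 ≤ k,
      killVar (a + (n + 1) + k) (f i) * schurFrom F (a + (n + 1)) k (ν i) = 0 := by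
    rwa [sum_filter_of_ne fun i _ hne => not_lt.mp fun hik => hne ?_]
    rw [schurFrom_eq_zero_of_lt_colLen hik, mul_zero]
  intro i hi hik
  refine hv a _ ν _ (hinj.mono (filter_subset _ _)) (fun j hj => hrow j (mem_filter.mp hj).1)
    (fun j hj => (mem_filter.mp hj).2) (fun j hj => ?_) hshort i (mem_filter.mpr ⟨hi, hik⟩)
  refine ((hsym j (mem_filter.mp hj).1).killVar _).mono fun x hx => ?_
  simp only [Set.mem_sdiff, Set.mem_Ico, Set.mem_singleton_iff] at hx ⊢
  omega

lemma SchurCoeffsVanish.killVar_first_eq_zero (hv : SchurCoeffsVanish F n (k + 1))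
    (hinj : Set.InjOn ν A) (hrow : ∀ i ∈ A, (ν i).rowLen 0 ≤ n + 1)
    (hcol : ∀ i ∈ A, (ν i).colLen 0 ≤ k + 1)
    (hsym : ∀ i ∈ A, IsSymmetricOn (Set.Ico a (a + (n + 1) + (k + 1))) (f i))
    (hsum : ∑ i ∈ A, f i * schurFrom F (a + (n + 1)) (k + 1) (ν i) = 0)
    (hshort : ∀ i ∈ A, (ν i).colLen 0 ≤ k → killVar (a + (n + 1) + k) (f i) = 0) :
    ∀ i ∈ A, (ν i).colLen 0 = k + 1 → killVar a (f i) = 0 := by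
  have hkill := congrArg (killVar a) hsum
  simp only [map_sum, map_mul, killVar_schurFrom_of_lt (by omega : a < a + (n + 1)),
    map_zero] at hkill
  have htall : ∑ i ∈ A with (ν i).colLen 0 = k + 1,
      killVar a (f i) * schurFrom F (a + (n + 1)) (k + 1) (ν i) = 0 := by
    rwa [sum_filter_of_ne fun i hi hne => ?_]
    by_contra hik
    refine hne ?_
    rw [(hsym i hi).killVar_eq_zero (j := a + (n + 1) + k) ⟨le_rfl, by omega⟩
      ⟨by omega, by omega⟩
      (hshort i hi (by have := hcol i hi; omega)), zero_mul]
  set E : MvPolynomial ℕ F := ∏ j ∈ range (k + 1), X (a + (n + 1) + j)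
  have hE : E ≠ 0 := prod_ne_zero_iff.mpr fun _ _ => X_ne_zero _
  have hfactor : E * ∑ i ∈ A with (ν i).colLen 0 = k + 1,
      killVar a (f i) * schurFrom F (a + 1 + n) (k + 1) (ν i).dropFirstColumn = 0 := by
    rw [mul_sum, ← htall]
    refine sum_congr rfl fun i hi => ?_
    rw [schurFrom_eq_prod_mul_of_colLen_eq (mem_filter.mp hi).2,
      show a + 1 + n = a + (n + 1) by omega]
    ring
  intro i hi hik
  refine hv (a + 1) _ (fun i => (ν i).dropFirstColumn) _ (fun i hi j hj h => ?_) (fun j hj => ?_)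
    (fun j hj => ?_) (fun j hj => ?_) ((mul_eq_zero.mp hfactor).resolve_left hE) i
    (mem_filter.mpr ⟨hi, hik⟩)
  · rw [mem_coe, mem_filter] at hi hj
    exact hinj hi.1 hj.1 (YoungDiagram.eq_of_dropFirstColumn_eq (hi.2.trans hj.2.symm) h)
  · rw [YoungDiagram.rowLen_dropFirstColumn]
    have := hrow j (mem_filter.mp hj).1
    omega
  · rw [YoungDiagram.colLen_dropFirstColumn, ← (mem_filter.mp hj).2]
    exact (ν j).colLen_anti 0 1 zero_le_one
  · refine ((hsym j (mem_filter.mp hj).1).killVar a).mono fun x hx => ?_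
    simp only [Set.mem_sdiff, Set.mem_Ico, Set.mem_singleton_iff] at hx ⊢
    omega

lemma SchurCoeffsVanish.succ_succ (h₁ : SchurCoeffsVanish F (n + 1) k)
    (h₂ : SchurCoeffsVanish F n (k + 1)) : SchurCoeffsVanish F (n + 1) (k + 1) := by
  intro a ι A ν f hinj hrow hcol hsym hsum
  set P : MvPolynomial ℕ F := ∏ j ∈ Finset.Ico a (a + (n + 1) + (k + 1)), X j
  have hP : ¬IsUnit P := fun hu => X_prime.not_isUnit
    (isUnit_of_dvd_unit (dvd_prod_of_mem _ (mem_Ico.mpr ⟨le_rfl, by omega⟩)) hu)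
  have hP0 : P ≠ 0 := prod_ne_zero_iff.mpr fun _ _ => X_ne_zero _
  have hPsym : IsSymmetricOn (Set.Ico a (a + (n + 1) + (k + 1))) P := by
    simpa only [coe_Ico] using isSymmetricOn_prod_X (R := F) (Finset.Ico a (a + (n + 1) + (k + 1)))
  refine eq_zero_of_forall_dvd_of_quotient hP
    (S := fun g => (∀ i ∈ A, IsSymmetricOn (Set.Ico a (a + (n + 1) + (k + 1))) (g i)) ∧
      ∑ i ∈ A, g i * schurFrom F (a + (n + 1)) (k + 1) (ν i) = 0)
    (fun g ⟨hgsym, hgsum⟩ i hi => ?_) (fun g g' ⟨hgsym, hgsum⟩ hgg' => ⟨fun i hi => ?_, ?_⟩)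
    ⟨hsym, hsum⟩
  · have hshort := h₁.killVar_last_eq_zero hinj hrow hgsym hgsum
    have htall := h₂.killVar_first_eq_zero hinj hrow hcol hgsym hgsum hshort
    have hgsym' : IsSymmetricOn (↑(Finset.Ico a (a + (n + 1) + (k + 1)))) (g i) := by
      simpa only [coe_Ico] using hgsym i hi
    by_cases hik : (ν i).colLen 0 ≤ k
    · exact prod_X_dvd_of_killVar_eq_zero hgsym' (mem_Ico.mpr ⟨by omega, by omega⟩)
        (hshort i hi hik)
    · exact prod_X_dvd_of_killVar_eq_zero hgsym' (mem_Ico.mpr ⟨le_rfl, by omega⟩)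
        (htall i hi (by have := hcol i hi; omega))
  · exact hPsym.of_mul_left hP0 (hgg' i hi ▸ hgsym i hi)
  · refine (mul_eq_zero.mp ?_).resolve_left hP0
    rw [mul_sum, ← hgsum]
    exact sum_congr rfl fun i hi => by rw [hgg' i hi, mul_assoc]

theorem schurCoeffsVanish (n k : ℕ) : SchurCoeffsVanish F n k := by
  induction n generalizing k with
  | zero => exact schurCoeffsVanish_of_eq_zero (.inl rfl)
  | succ n ihn =>
    induction k with
    | zero => exact schurCoeffsVanish_of_eq_zero (.inr rfl)
    | succ k ihk => exact ihk.succ_succ (ihn (k + 1))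

lemma rename_val_schurPoly {m k : ℕ} (hk : k ≤ m) (ν : YoungDiagram) :
    rename Fin.val (schurPoly F m ν k fun i => ⟨m - k + i, by omega⟩) =
      schurFrom F (m - k) k ν := by
  simp [schurPoly, schurFrom, map_sum, map_prod]

theorem linearIndependent_schurPoly {m k : ℕ} (hk : k ≤ m) :
    LinearIndependent (symmetricSubalgebra (Fin m) F)
      fun ν : {ν : YoungDiagram // ν.rowLen 0 ≤ m - k ∧ ν.colLen 0 ≤ k} =>
        schurPoly F m ν k fun i => ⟨m - k + i, by omega⟩ := by
  rw [linearIndependent_iff']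
  intro s g hsum ν hν
  have hsum' : ∑ ν ∈ s, rename Fin.val (g ν : MvPolynomial (Fin m) F) *
      schurFrom F (0 + (m - k)) k ν = 0 := by
    simpa [Subalgebra.smul_def, ← rename_val_schurPoly hk, ← map_mul, ← map_sum] using
      congrArg (rename Fin.val) hsum
  have hsym (ν : _) : IsSymmetricOn (Set.Ico 0 (0 + (m - k) + k))
      (rename Fin.val (g ν : MvPolynomial (Fin m) F)) :=
    ((g ν).2.isSymmetricOn_rename Fin.val_injective).mono fun x hx =>
      ⟨⟨x, by simp only [Set.mem_Ico] at hx; omega⟩, rfl⟩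
  have := schurCoeffsVanish (m - k) k 0 s Subtype.val _ Subtype.val_injective.injOn
    (fun ν _ => ν.2.1) (fun ν _ => ν.2.2) (fun ν _ => hsym ν) hsum' ν hν
  exact Subtype.ext (rename_injective _ Fin.val_injective (by simpa using this))

theorem linearIndependent_prod_esymm_mul_schurPoly {m k : ℕ} (hk : k ≤ m)
    (Q : Multiset ℕ × YoungDiagram → Prop) :
    LinearIndependent F fun p : {p : Multiset ℕ × YoungDiagram //
        (∀ a ∈ p.1, 0 < a ∧ a ≤ m) ∧ p.2.rowLen 0 ≤ m - k ∧ p.2.colLen 0 ≤ k ∧ Q p} =>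
      (p.1.1.map fun d => esymm (Fin m) F d).prod *
        schurPoly F m p.1.2 k fun i => ⟨m - k + i, by omega⟩ := by
  let φ (p : {p : Multiset ℕ × YoungDiagram //
      (∀ a ∈ p.1, 0 < a ∧ a ≤ m) ∧ p.2.rowLen 0 ≤ m - k ∧ p.2.colLen 0 ≤ k ∧ Q p}) :
      Multiset (Fin m) × {ν : YoungDiagram // ν.rowLen 0 ≤ m - k ∧ ν.colLen 0 ≤ k} :=
    (p.1.1.pmap (fun d hd => ⟨d - 1, by omega⟩) p.2.1, ⟨p.1.2, p.2.2.1, p.2.2.2.1⟩)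
  have hφ : Function.Injective φ := by
    rintro ⟨⟨l, ν⟩, hp⟩ ⟨⟨l', ν'⟩, hq⟩ h
    simp only [φ, Prod.mk.injEq, Subtype.mk.injEq] at h
    have hl := congrArg (Multiset.map fun i : Fin m => (i : ℕ) + 1) h.1
    rw [Multiset.map_succ_pmap_pred, Multiset.map_succ_pmap_pred] at hl
    exact Subtype.ext (Prod.ext hl h.2)
  have hprod := (linearIndependent_smul
    (linearIndependent_esymmAlgHom_prod_X (Fin m) F (n := m) (by simp))
    (linearIndependent_schurPoly hk)).comp φ hφ
  convert hprod using 2 with p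
  · rw [Function.comp_apply, Subalgebra.smul_def, coe_esymmAlgHom_prod_map_X,
      Multiset.map_succ_pmap_pred, smul_eq_mul]
  · rfl -- the `Semiring F` instances through `Field F` and through `CommRing F`

end Independence

/-- The set `L(m,k,t)` of products `e_λ(x_1,…,x_m) · s_ν(x_{m-k+1},…,x_m)`,
where `ν` fits inside the `k × (m-k)` rectangle, `λ` is a partition with
parts ≤ m (encoded as a multiset of positive parts) and at most `χ` parts,
`χ = t` if `ν_1 < m-k` and `χ = t-1` if `ν_1 = m-k`, is linearly independent
in `F[x_1,…,x_m]`. -/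
theorem L_set_linear_independent (F : Type*) [Field F]
    (m k t : ℕ) (hk : k ≤ m) :
    LinearIndependent F
      (fun p : {p : Multiset ℕ × YoungDiagram //
          (∀ a ∈ p.1, 0 < a ∧ a ≤ m) ∧
          p.2.rowLen 0 ≤ m - k ∧ p.2.colLen 0 ≤ k ∧
          ((Multiset.card p.1 : ℤ) ≤
            if p.2.rowLen 0 < m - k then (t : ℤ) else (t : ℤ) - 1)} =>
        (p.1.1.map fun d => MvPolynomial.esymm (Fin m) F d).prod *
          schurPoly F m p.1.2 k
            (fun i => ⟨m - k + (i : ℕ), by have := i.isLt; omega⟩)) :=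
  linearIndependent_prod_esymm_mul_schurPoly hk _
end

section
/- Let F have characteristic 0 and let n ≥ 1. For J ⊆ [n] define f_J = ∏_{j∈J} ( x_j · ∏_{j<i≤n}(x_j - x_i) ) in F[x_1,...,x_n], and let I_n = (e_1,...,e_n) be the coinvariant ideal. If 1 ∈ J then f_J ∈ I_n. -/
/-!
Let `P(t) = ∏ᵢ (t - xᵢ)`. Its lower coefficients are `± eₖ`, so modulo `I_n` it becomes `tⁿ`.
Since `P(x₁) = 0` we get `x₁ⁿ ∈ I_n`, and since `P'(x₁) = ∏_{i > 1} (x₁ - xᵢ)` we get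
`x₁ · ∏_{i > 1} (x₁ - xᵢ) ≡ x₁ · n x₁ⁿ⁻¹ = n x₁ⁿ ≡ 0`. This factor divides `f_J` when `1 ∈ J`.
-/

open MvPolynomial

/-- `f_J = ∏_{j ∈ J} ( x_j · ∏_{j < i ≤ n} (x_j - x_i) )`. -/
noncomputable def fJ (n : ℕ) (F : Type*) [Field F] (J : Finset (Fin n)) :
    MvPolynomial (Fin n) F :=
  ∏ j ∈ J, (MvPolynomial.X j *
    ∏ i ∈ Finset.univ.filter (fun i : Fin n => j < i),
      (MvPolynomial.X j - MvPolynomial.X i))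

-- Inside this namespace `X`, `C`, `eval` are univariate despite `open MvPolynomial`.
namespace Polynomial

variable {R : Type*} [CommRing R]

theorem _root_.Multiset.prod_X_sub_C_eq_X_pow_of_esymm_eq_zero (s : Multiset R)
    (h : ∀ k, 0 < k → k ≤ s.card → s.esymm k = 0) :
    (s.map fun a => X - C a).prod = X ^ s.card := by
  rw [s.prod_X_sub_X_eq_sum_esymm, Finset.sum_range_succ', Finset.sum_eq_zero]
  · simp [Multiset.esymm]
  · intro k hk
    rw [h (k + 1) k.succ_pos (by simpa [Nat.lt_succ_iff] using hk)]
    simp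

theorem _root_.Multiset.mul_prod_erase_sub_eq_zero_of_esymm_eq_zero [DecidableEq R]
    {s : Multiset R} {a : R} (ha : a ∈ s) (h : ∀ k, 0 < k → k ≤ s.card → s.esymm k = 0) :
    a * ((s.erase a).map (a - ·)).prod = 0 := by
  have hP := s.prod_X_sub_C_eq_X_pow_of_esymm_eq_zero h
  have hcard : 0 < s.card := Multiset.card_pos_iff_exists_mem.mpr ⟨a, ha⟩
  have hroot : a ^ s.card = 0 := by
    rw [← eval_X (x := a), ← eval_pow, ← hP, eval_multiset_prod]
    exact Multiset.prod_eq_zero (Multiset.mem_map.mpr ⟨_, Multiset.mem_map_of_mem _ ha, by simp⟩)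
  rw [← eval_multiset_prod_X_sub_C_derivative ha, hP, derivative_X_pow, eval_mul, eval_C,
    eval_pow, eval_X, mul_left_comm, ← pow_succ', Nat.sub_add_cancel hcard, hroot, mul_zero]

end Polynomial

theorem Finset.mul_prod_erase_sub_eq_zero_of_esymm_eq_zero {R ι : Type*} [CommRing R]
    [DecidableEq ι] {s : Finset ι} (x : ι → R) {i : ι} (hi : i ∈ s)
    (h : ∀ k, 0 < k → k ≤ s.card → (s.val.map x).esymm k = 0) :
    x i * ∏ j ∈ s.erase i, (x i - x j) = 0 := by
  classical
  have := Multiset.mul_prod_erase_sub_eq_zero_of_esymm_eq_zero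
    (Multiset.mem_map_of_mem x hi) (by simpa using h)
  rwa [← Multiset.map_erase_of_mem _ _ hi, Multiset.map_map] at this

theorem MvPolynomial.X_mul_prod_erase_sub_mem {R σ : Type*} [CommRing R] [Fintype σ]
    [DecidableEq σ] {I : Ideal (MvPolynomial σ R)}
    (h : ∀ k, 0 < k → k ≤ Fintype.card σ → esymm σ R k ∈ I) (i : σ) :
    X i * ∏ j ∈ Finset.univ.erase i, (X i - X j) ∈ I := by
  rw [← Ideal.Quotient.eq_zero_iff_mem, map_mul, map_prod]
  simp only [map_sub]
  refine Finset.mul_prod_erase_sub_eq_zero_of_esymm_eq_zero (fun j => Ideal.Quotient.mk I (X j))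
    (Finset.mem_univ i) fun k hk hkn => ?_
  have hquot := aeval_esymm_eq_multiset_esymm σ R k (fun j => Ideal.Quotient.mkₐ R I (X j))
  rw [show aeval (fun j => Ideal.Quotient.mkₐ R I (X j)) = Ideal.Quotient.mkₐ R I from
    (aeval_unique _).symm] at hquot
  simp only [Ideal.Quotient.mkₐ_eq_mk] at hquot
  rw [← hquot, Ideal.Quotient.eq_zero_iff_mem]
  exact h k hk hkn

theorem fJ_mem_coinvariant_ideal_general (F : Type*) [Field F]
    (n : ℕ) (hn : 0 < n) (J : Finset (Fin n))
    (h1 : (⟨0, hn⟩ : Fin n) ∈ J) :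
    fJ n F J ∈ Ideal.span (Set.range fun k : Fin n =>
      MvPolynomial.esymm (Fin n) F ((k : ℕ) + 1)) := by
  have hesymm : ∀ k, 0 < k → k ≤ Fintype.card (Fin n) → esymm (Fin n) F k ∈
      Ideal.span (Set.range fun k : Fin n => esymm (Fin n) F ((k : ℕ) + 1)) := by
    intro k hk hkn
    rw [Fintype.card_fin] at hkn
    exact Ideal.subset_span ⟨⟨k - 1, by omega⟩, by simp [Nat.sub_add_cancel hk]⟩
  have hlater : Finset.univ.filter (fun i : Fin n => ⟨0, hn⟩ < i) = Finset.univ.erase ⟨0, hn⟩ := by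
    ext i
    simp [Fin.lt_def, Fin.ext_iff, Nat.pos_iff_ne_zero]
  rw [fJ, ← Finset.mul_prod_erase J _ h1, hlater]
  exact Ideal.mul_mem_right _ _ (X_mul_prod_erase_sub_mem hesymm _)

/-- If `1 ∈ J` then `f_J` lies in the coinvariant ideal `I_n = (e_1,…,e_n)`. -/
theorem fJ_mem_coinvariant_ideal (F : Type*) [Field F] [CharZero F]
    (n : ℕ) (hn : 0 < n) (J : Finset (Fin n))
    (h1 : (⟨0, hn⟩ : Fin n) ∈ J) :
    fJ n F J ∈ Ideal.span (Set.range fun k : Fin n =>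
      MvPolynomial.esymm (Fin n) F ((k : ℕ) + 1)) :=
  fJ_mem_coinvariant_ideal_general F n hn J h1
end

section
/- Let F be a field of characteristic 0 and let A, B be graded F-algebras with actions of a finite group W by graded algebra automorphisms. Let I_A ⊆ A, I_B ⊆ B, and I_{A⊗B} ⊆ A⊗B be the ideals generated by W-invariant elements of positive degree (for A⊗B, with the diagonal W-action). Then the natural surjection π: A⊗B → (A/I_A)⊗(B/I_B) satisfies π^{-1}(K) = I_{A⊗B}, where K ⊆ (A/I_A)⊗(B/I_B) is the ideal generated by W-invariants of positive degree. Consequently (A⊗B)/I_{A⊗B} ≅ ((A/I_A)⊗(B/I_B))/K as graded W-algebras. -/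
open scoped TensorProduct

/-- The degree-`d` piece of the tensor product of two graded vector spaces:
the span of the images of `𝒳 i ⊗ 𝒴 j` with `i + j = d`. -/
noncomputable def tensorGrade {F X Y : Type*} [Field F]
    [AddCommGroup X] [Module F X] [AddCommGroup Y] [Module F Y]
    (𝒳 : ℕ → Submodule F X) (𝒴 : ℕ → Submodule F Y) (d : ℕ) :
    Submodule F (X ⊗[F] Y) :=
  ⨆ p : {p : ℕ × ℕ // p.1 + p.2 = d},
    LinearMap.range (TensorProduct.map (𝒳 p.1.1).subtype (𝒴 p.1.2).subtype)

/-! The kernel of `π` is generated by `I_A ⊗ 1` and `1 ⊗ I_B`, and the generators `a ⊗ 1`,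
`1 ⊗ b` of these are themselves invariants of positive degree in `A ⊗ B`. Hence
`ker π ⊆ I_{A⊗B}`, and `π⁻¹(K) = I_{A⊗B}` reduces to: `π` maps the invariants of positive
degree of `A ⊗ B` onto those of `(A/I_A) ⊗ (B/I_B)`. As `I_A` and `I_B` are `W`-stable, the
action descends along `π`, which gives one inclusion. Conversely, an element `y` of the quotient
of degree `d`, invariant in the descended sense, lifts to some `x` of degree `d` with
`π (w • x) = π x` for all `w`; since `char F = 0`, the average `|W|⁻¹ ∑ w • x` is an invariant
lift of `y` of degree `d`. -/

section tensorGrade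

variable {F X Y X' Y' : Type*} [Field F]
  [AddCommGroup X] [Module F X] [AddCommGroup Y] [Module F Y]
  [AddCommGroup X'] [Module F X'] [AddCommGroup Y'] [Module F Y']

theorem tensorGrade_mono {𝒳 𝒳' : ℕ → Submodule F X} {𝒴 𝒴' : ℕ → Submodule F Y}
    (hX : ∀ i, 𝒳 i ≤ 𝒳' i) (hY : ∀ i, 𝒴 i ≤ 𝒴' i) (d : ℕ) :
    tensorGrade 𝒳 𝒴 d ≤ tensorGrade 𝒳' 𝒴' d := by
  refine iSup_mono fun p => ?_
  rw [← Submodule.subtype_comp_inclusion _ _ (hX _), ← Submodule.subtype_comp_inclusion _ _ (hY _),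
    TensorProduct.map_comp]
  exact LinearMap.range_comp_le_range _ _

theorem map_tensorGrade (f : X →ₗ[F] X') (g : Y →ₗ[F] Y')
    (𝒳 : ℕ → Submodule F X) (𝒴 : ℕ → Submodule F Y) (d : ℕ) :
    (tensorGrade 𝒳 𝒴 d).map (TensorProduct.map f g) =
      tensorGrade (fun i => (𝒳 i).map f) (fun i => (𝒴 i).map g) d := by
  simp only [tensorGrade, Submodule.map_iSup, ← LinearMap.range_comp, ← TensorProduct.map_comp]
  refine iSup_congr fun p => ?_
  have hf : f ∘ₗ (𝒳 p.1.1).subtype = ((𝒳 p.1.1).map f).subtype ∘ₗ f.submoduleMap _ := rfl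
  have hg : g ∘ₗ (𝒴 p.1.2).subtype = ((𝒴 p.1.2).map g).subtype ∘ₗ g.submoduleMap _ := rfl
  rw [hf, hg, TensorProduct.map_comp, LinearMap.range_comp_of_range_eq_top]
  exact LinearMap.range_eq_top.2 (TensorProduct.map_surjective
    (f.submoduleMap_surjective _) (g.submoduleMap_surjective _))

theorem map_mem_tensorGrade {𝒳 : ℕ → Submodule F X} {𝒴 : ℕ → Submodule F Y}
    {𝒳' : ℕ → Submodule F X'} {𝒴' : ℕ → Submodule F Y'} {f : X →ₗ[F] X'} {g : Y →ₗ[F] Y'}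
    (hf : ∀ i, ∀ x ∈ 𝒳 i, f x ∈ 𝒳' i) (hg : ∀ i, ∀ y ∈ 𝒴 i, g y ∈ 𝒴' i) {d : ℕ}
    {t : X ⊗[F] Y} (ht : t ∈ tensorGrade 𝒳 𝒴 d) : TensorProduct.map f g t ∈ tensorGrade 𝒳' 𝒴' d :=
  tensorGrade_mono (fun i => Submodule.map_le_iff_le_comap.2 (hf i))
    (fun i => Submodule.map_le_iff_le_comap.2 (hg i)) d
    (map_tensorGrade f g 𝒳 𝒴 d ▸ Submodule.mem_map_of_mem ht)

theorem tmul_mem_tensorGrade {𝒳 : ℕ → Submodule F X} {𝒴 : ℕ → Submodule F Y} {i j : ℕ}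
    {x : X} {y : Y} (hx : x ∈ 𝒳 i) (hy : y ∈ 𝒴 j) : x ⊗ₜ y ∈ tensorGrade 𝒳 𝒴 (i + j) :=
  Submodule.mem_iSup_of_mem ⟨(i, j), rfl⟩ ⟨⟨x, hx⟩ ⊗ₜ ⟨y, hy⟩, rfl⟩

end tensorGrade

namespace Representation

variable {k G V U : Type*} [CommRing k] [Group G] [Fintype G] [Invertible (Fintype.card G : k)]
  [AddCommGroup V] [Module k V] [AddCommGroup U] [Module k U]

theorem averageMap_apply (ρ : Representation k G V) (v : V) :
    ρ.averageMap v = ⅟(Fintype.card G : k) • ∑ g : G, ρ g v := by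
  simp [GroupAlgebra.average, map_sum]

theorem exists_mem_invariants_map_eq (ρ : Representation k G V) {P : Submodule k V}
    (hP : ∀ g, ∀ v ∈ P, ρ g v ∈ P) (π : V →ₗ[k] U) {v : V} (hv : v ∈ P)
    (hπ : ∀ g, π (ρ g v) = π v) : ∃ v₀ ∈ P, v₀ ∈ ρ.invariants ∧ π v₀ = π v := by
  refine ⟨ρ.averageMap v, ?_, ρ.averageMap_invariant v, ?_⟩
  · rw [averageMap_apply]
    exact P.smul_mem _ (P.sum_mem fun g _ => hP g v hv)
  · rw [averageMap_apply, map_smul, map_sum, Finset.sum_congr rfl fun g _ => hπ g,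
      Finset.sum_const, Finset.card_univ, ← Nat.cast_smul_eq_nsmul k, smul_smul,
      invOf_mul_self, one_smul]

end Representation

open scoped Pointwise in
theorem Ideal.smul_mem_span_of_forall_smul_eq {M R : Type*} [Monoid M] [CommRing R]
    [MulSemiringAction M R] {s : Set R} (hs : ∀ m : M, ∀ x ∈ s, m • x = x) (m : M) {x : R}
    (hx : x ∈ Ideal.span s) : m • x ∈ Ideal.span s := by
  have : m • s = s := (Set.image_congr (hs m)).trans (Set.image_id' s)
  simpa only [Ideal.smul_closure, this] using Ideal.smul_mem_pointwise_smul m x _ hx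

theorem Ideal.comap_span_image_eq {R S G : Type*} [CommRing R] [CommRing S] [FunLike G R S]
    [RingHomClass G R S] {f : G} (hf : Function.Surjective f) {s : Set R}
    (hker : RingHom.ker f ≤ Ideal.span s) :
    (Ideal.span (f '' s)).comap f = Ideal.span s := by
  rw [← Ideal.map_span, Ideal.comap_map_of_surjective' f hf, sup_eq_left.2 hker]

namespace Algebra.TensorProduct

variable {R A B A' B' : Type*} [CommRing R] [CommRing A] [CommRing B] [CommRing A'] [CommRing B']
  [Algebra R A] [Algebra R B] [Algebra R A'] [Algebra R B']

open Ideal.Quotient in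
theorem map_mkₐ_map_eq_of_map_mkₐ_eq {I : Ideal A} {J : Ideal B} {I' : Ideal A'} {J' : Ideal B'}
    {f : A →ₐ[R] A'} {g : B →ₐ[R] B'} (hI : I ≤ I'.comap f) (hJ : J ≤ J'.comap g)
    {x x' : A ⊗[R] B} (h : map (mkₐ R I) (mkₐ R J) x = map (mkₐ R I) (mkₐ R J) x') :
    map (mkₐ R I') (mkₐ R J') (map f g x) = map (mkₐ R I') (mkₐ R J') (map f g x') := by
  have hcomm : (map (mkₐ R I') (mkₐ R J')).comp (map f g) =
      (map (Ideal.quotientMapₐ I' f hI) (Ideal.quotientMapₐ J' g hJ)).comp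
        (map (mkₐ R I) (mkₐ R J)) := by
    rw [← map_comp, ← map_comp]
    rfl
  have hcomm_apply := DFunLike.congr_fun hcomm
  simp only [AlgHom.comp_apply] at hcomm_apply
  rw [hcomm_apply, hcomm_apply, h]

open Ideal.Quotient in
theorem ker_map_mkₐ_le {I : Ideal A} {J : Ideal B} {L : Ideal (A ⊗[R] B)}
    (hI : I ≤ L.comap (includeLeft : A →ₐ[R] A ⊗[R] B)) (hJ : J ≤ L.comap includeRight) :
    RingHom.ker (map (mkₐ R I) (mkₐ R J)) ≤ L := by
  rw [map_ker _ _ (mkₐ_surjective R I) (mkₐ_surjective R J), ← RingHom.ker_coe_toRingHom,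
    mkₐ_ker, ← RingHom.ker_coe_toRingHom, mkₐ_ker]
  exact sup_le (Ideal.map_le_iff_le_comap.2 hI) (Ideal.map_le_iff_le_comap.2 hJ)

end Algebra.TensorProduct

noncomputable def Ideal.quotientComapAlgEquiv {R A B : Type*} [CommSemiring R] [CommRing A]
    [CommRing B] [Algebra R A] [Algebra R B] {f : A →ₐ[R] B} (hf : Function.Surjective f)
    (K : Ideal B) : (A ⧸ K.comap f) ≃ₐ[R] B ⧸ K :=
  (Ideal.quotientEquivAlgOfEq R (by ext; simp [Ideal.Quotient.eq_zero_iff_mem])).trans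
    (Ideal.quotientKerAlgEquivOfSurjective (f := (Ideal.Quotient.mkₐ R K).comp f)
      ((Ideal.Quotient.mkₐ_surjective R K).comp hf))

section Invariants

variable {F A B W : Type*} [Field F] [CommRing A] [CommRing B] [Algebra F A] [Algebra F B]
  [Group W] [MulSemiringAction W A] [MulSemiringAction W B]
  [SMulCommClass W F A] [SMulCommClass W F B] {𝒜 : ℕ → Submodule F A} {ℬ : ℕ → Submodule F B}

open MulSemiringAction Algebra.TensorProduct Ideal.Quotient

theorem tmul_one_mem_invariants [GradedAlgebra ℬ] {a : A}
    (ha : a ∈ {a : A | (∃ d : ℕ, 0 < d ∧ a ∈ 𝒜 d) ∧ ∀ w : W, w • a = a}) :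
    a ⊗ₜ[F] (1 : B) ∈ {x : A ⊗[F] B | (∃ d : ℕ, 0 < d ∧ x ∈ tensorGrade 𝒜 ℬ d) ∧
      ∀ w : W, map (toAlgHom F A w) (toAlgHom F B w) x = x} := by
  obtain ⟨⟨d, hd, had⟩, hfix⟩ := ha
  refine ⟨⟨d, hd, add_zero d ▸ tmul_mem_tensorGrade had SetLike.GradedOne.one_mem⟩, fun w => ?_⟩
  rw [map_tmul, map_one, toAlgHom_apply, hfix w]

theorem one_tmul_mem_invariants [GradedAlgebra 𝒜] {b : B}
    (hb : b ∈ {b : B | (∃ d : ℕ, 0 < d ∧ b ∈ ℬ d) ∧ ∀ w : W, w • b = b}) :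
    (1 : A) ⊗ₜ[F] b ∈ {x : A ⊗[F] B | (∃ d : ℕ, 0 < d ∧ x ∈ tensorGrade 𝒜 ℬ d) ∧
      ∀ w : W, map (toAlgHom F A w) (toAlgHom F B w) x = x} := by
  obtain ⟨⟨d, hd, hbd⟩, hfix⟩ := hb
  refine ⟨⟨d, hd, zero_add d ▸ tmul_mem_tensorGrade SetLike.GradedOne.one_mem hbd⟩, fun w => ?_⟩
  rw [map_tmul, map_one, toAlgHom_apply, hfix w]

theorem map_mkₐ_image_invariants [Fintype W] [Invertible (Fintype.card W : F)]
    (h𝒜 : ∀ (w : W) (d : ℕ), ∀ a ∈ 𝒜 d, w • a ∈ 𝒜 d)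
    (hℬ : ∀ (w : W) (d : ℕ), ∀ b ∈ ℬ d, w • b ∈ ℬ d) {I : Ideal A} {J : Ideal B}
    (hI : ∀ w : W, I ≤ I.comap (toAlgHom F A w)) (hJ : ∀ w : W, J ≤ J.comap (toAlgHom F B w)) :
    map (mkₐ F I) (mkₐ F J) '' {x : A ⊗[F] B | (∃ d : ℕ, 0 < d ∧ x ∈ tensorGrade 𝒜 ℬ d) ∧
      ∀ w : W, map (toAlgHom F A w) (toAlgHom F B w) x = x} =
    {y : (A ⧸ I) ⊗[F] (B ⧸ J) | (∃ d : ℕ, 0 < d ∧ y ∈ tensorGrade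
        (fun d => (𝒜 d).map (mkₐ F I).toLinearMap) (fun d => (ℬ d).map (mkₐ F J).toLinearMap) d) ∧
      ∀ w : W, ∀ x : A ⊗[F] B, map (mkₐ F I) (mkₐ F J) x = y →
        map (mkₐ F I) (mkₐ F J) (map (toAlgHom F A w) (toAlgHom F B w) x) = y} := by
  ext y
  constructor
  · rintro ⟨x, ⟨⟨d, hd, hx⟩, hfix⟩, rfl⟩
    refine ⟨⟨d, hd, map_mem_tensorGrade (fun _ _ => Submodule.mem_map_of_mem)
      (fun _ _ => Submodule.mem_map_of_mem) hx⟩, fun w x' hx' => ?_⟩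
    rw [map_mkₐ_map_eq_of_map_mkₐ_eq (hI w) (hJ w) hx', hfix w]
  · rintro ⟨⟨d, hd, hy⟩, hinv⟩
    rw [← map_tensorGrade (mkₐ F I).toLinearMap (mkₐ F J).toLinearMap] at hy
    obtain ⟨x, hx, rfl⟩ := hy
    obtain ⟨x₀, hx₀, hfix, hx₀x⟩ := Representation.exists_mem_invariants_map_eq
      ((Representation.ofDistribMulAction F W A).tprod (Representation.ofDistribMulAction F W B))
      (fun w _ => map_mem_tensorGrade (h𝒜 w) (hℬ w)) (map (mkₐ F I) (mkₐ F J)).toLinearMap hx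
      (fun w => hinv w x rfl)
    exact ⟨x₀, ⟨⟨d, hd, hx₀⟩, hfix⟩, hx₀x⟩

end Invariants

/-- Let `A`, `B` be graded `F`-algebras (char `F = 0`) with a finite group `W`
acting by graded algebra automorphisms, `I_A`, `I_B`, `I_{A⊗B}` the ideals
generated by the `W`-invariants of positive degree (diagonal action on
`A ⊗ B`), and `K` the ideal of `(A/I_A) ⊗ (B/I_B)` generated by the
`W`-invariants of positive degree (for the descended diagonal action,
expressed via the surjection `π`). Then `π⁻¹(K) = I_{A⊗B}`, and consequently
`(A⊗B)/I_{A⊗B} ≅ ((A/I_A)⊗(B/I_B))/K`. -/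
theorem invariant_ideal_tensor (F : Type*) [Field F] [CharZero F]
    (A B : Type*) [CommRing A] [CommRing B] [Algebra F A] [Algebra F B]
    (W : Type*) [Group W] [Finite W]
    [MulSemiringAction W A] [MulSemiringAction W B]
    [SMulCommClass W F A] [SMulCommClass W F B]
    (𝒜 : ℕ → Submodule F A) (ℬ : ℕ → Submodule F B)
    [GradedAlgebra 𝒜] [GradedAlgebra ℬ]
    (h𝒜 : ∀ (w : W) (d : ℕ), ∀ a ∈ 𝒜 d, w • a ∈ 𝒜 d)
    (hℬ : ∀ (w : W) (d : ℕ), ∀ b ∈ ℬ d, w • b ∈ ℬ d)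
    -- the ideal of `A ⊗ B` generated by `W`-invariants of positive degree
    (IAB : Ideal (A ⊗[F] B))
    (hIAB : IAB = Ideal.span {x : A ⊗[F] B |
      (∃ d : ℕ, 0 < d ∧ x ∈ tensorGrade 𝒜 ℬ d) ∧
      ∀ w : W, Algebra.TensorProduct.map
        (MulSemiringAction.toAlgHom F A w) (MulSemiringAction.toAlgHom F B w) x = x})
    -- the ideals of invariants of positive degree in `A` and `B`
    (IA : Ideal A)
    (hIA : IA = Ideal.span {a : A | (∃ d : ℕ, 0 < d ∧ a ∈ 𝒜 d) ∧ ∀ w : W, w • a = a})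
    (IB : Ideal B)
    (hIB : IB = Ideal.span {b : B | (∃ d : ℕ, 0 < d ∧ b ∈ ℬ d) ∧ ∀ w : W, w • b = b})
    -- the natural surjection `π : A ⊗ B → (A/I_A) ⊗ (B/I_B)`
    (π : A ⊗[F] B →ₐ[F] ((A ⧸ IA) ⊗[F] (B ⧸ IB)))
    (hπ : π = Algebra.TensorProduct.map (Ideal.Quotient.mkₐ F IA) (Ideal.Quotient.mkₐ F IB))
    -- the ideal generated by `W`-invariants of positive degree in the tensor
    -- product of the quotients, with the grading inherited from `A` and `B`
    -- and the `W`-action descended along `π`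
    (K : Ideal ((A ⧸ IA) ⊗[F] (B ⧸ IB)))
    (hK : K = Ideal.span {y : (A ⧸ IA) ⊗[F] (B ⧸ IB) |
      (∃ d : ℕ, 0 < d ∧ y ∈ tensorGrade
        (fun d => (𝒜 d).map (Ideal.Quotient.mkₐ F IA).toLinearMap)
        (fun d => (ℬ d).map (Ideal.Quotient.mkₐ F IB).toLinearMap) d) ∧
      ∀ w : W, ∀ x : A ⊗[F] B, π x = y →
        π (Algebra.TensorProduct.map
          (MulSemiringAction.toAlgHom F A w) (MulSemiringAction.toAlgHom F B w) x) = y}) :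
    Ideal.comap π K = IAB ∧
      Nonempty (((A ⊗[F] B) ⧸ IAB) ≃ₐ[F] (((A ⧸ IA) ⊗[F] (B ⧸ IB)) ⧸ K)) := by
  cases nonempty_fintype W
  let _ : Invertible (Fintype.card W : F) :=
    invertibleOfNonzero (Nat.cast_ne_zero.2 Fintype.card_ne_zero)
  have hIA_stable (w : W) : IA ≤ IA.comap (MulSemiringAction.toAlgHom F A w) := by
    rw [hIA]
    exact fun _ => Ideal.smul_mem_span_of_forall_smul_eq (fun w _ ha => ha.2 w) w
  have hIB_stable (w : W) : IB ≤ IB.comap (MulSemiringAction.toAlgHom F B w) := by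
    rw [hIB]
    exact fun _ => Ideal.smul_mem_span_of_forall_smul_eq (fun w _ hb => hb.2 w) w
  have hπ_surj : Function.Surjective π := hπ ▸ Algebra.TensorProduct.map_surjective _ _
    (Ideal.Quotient.mkₐ_surjective F IA) (Ideal.Quotient.mkₐ_surjective F IB)
  have hker : RingHom.ker π ≤ IAB := by
    rw [hπ, hIAB]
    refine Algebra.TensorProduct.ker_map_mkₐ_le ?_ ?_
    · rw [hIA, Ideal.span_le]
      exact fun a ha => Ideal.subset_span (tmul_one_mem_invariants ha)
    · rw [hIB, Ideal.span_le]
      exact fun b hb => Ideal.subset_span (one_tmul_mem_invariants hb)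
  have hcomap : K.comap π = IAB := by
    rw [hK, hIAB, hπ, ← map_mkₐ_image_invariants h𝒜 hℬ hIA_stable hIB_stable]
    exact Ideal.comap_span_image_eq (hπ ▸ hπ_surj) (hπ ▸ hIAB ▸ hker)
  exact ⟨hcomap, ⟨(Ideal.quotientEquivAlgOfEq F hcomap.symm).trans
    (Ideal.quotientComapAlgEquiv hπ_surj K)⟩⟩
end
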